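/- arXiv:2601.15658 — 5 statements merged into one kernel-verified Lean document; each statement's English description precedes it below -/
import Mathlib

section
/- Let h ∈ C_e(I). Then the function Rh (given by (Rh)(t) = F_j(L_j⁻¹(t), h(L_j⁻¹(t))) for t ∈ I_j) is well-defined (the two formulas agree at the shared endpoints t_j), continuous on I, and satisfies (Rh)(t_j) = (v_j, w_j) for every j = 0, 1, …, N; that is, Rh ∈ C_d(I). -/
/-!
Each `L j` is affine and sends `t 0 < t N` to `t (j - 1) < t j`, so it is increasing and `Rh` on
`I_j` is `x ↦ F j x (h x)` composed with the continuous inverse of `L j`. The endpoint conditions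
on `F j` and `h` make consecutive pieces agree at the nodes, so they glue to a continuous function
on `I`, whose value at `t j` is `F j (t N) (h (t N)) = (v j, w j)`.
-/

open Set

section Gluing

variable {X : Type*} (t : ℕ → ℝ) (g : ℕ → ℝ → X)

noncomputable def glueIcc : ℕ → ℝ → X
  | 0 => g 0
  | k + 1 => fun y => if y ≤ t (k + 1) then glueIcc k y else g (k + 1) y

variable {t g}

theorem glueIcc_eqOn {k : ℕ} (ht : MonotoneOn t (Iic (k + 1)))
    (hmatch : ∀ j < k, g j (t (j + 1)) = g (j + 1) (t (j + 1))) {j : ℕ} (hj : j ≤ k) :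
    EqOn (glueIcc t g k) (g j) (Icc (t j) (t (j + 1))) := by
  induction k generalizing j with
  | zero =>
    obtain rfl : j = 0 := by omega
    exact fun _ _ => rfl
  | succ k ih =>
    have ht' : MonotoneOn t (Iic (k + 1)) := ht.mono (Iic_subset_Iic.2 (by omega))
    have hmatch' : ∀ i < k, g i (t (i + 1)) = g (i + 1) (t (i + 1)) :=
      fun i hi => hmatch i (by omega)
    intro y hy
    rcases hj.lt_or_eq with hj | rfl
    · have hyk : y ≤ t (k + 1) :=
        hy.2.trans (ht (mem_Iic.2 (by omega)) (mem_Iic.2 (by omega)) (by omega))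
      simp only [glueIcc, if_pos hyk]
      exact ih ht' hmatch' (by omega) hy
    · simp only [glueIcc]
      split_ifs with hyk
      · obtain rfl : y = t (k + 1) := le_antisymm hyk hy.1
        have hk : t k ≤ t (k + 1) := ht (mem_Iic.2 (by omega)) (mem_Iic.2 (by omega)) (by omega)
        exact (ih ht' hmatch' le_rfl ⟨hk, le_rfl⟩).trans (hmatch k (by omega))
      · rfl

theorem continuousOn_glueIcc [TopologicalSpace X] {k : ℕ} (ht : MonotoneOn t (Iic (k + 1)))
    (hmatch : ∀ j < k, g j (t (j + 1)) = g (j + 1) (t (j + 1)))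
    (hg : ∀ j ≤ k, ContinuousOn (g j) (Icc (t j) (t (j + 1)))) :
    ContinuousOn (glueIcc t g k) (Icc (t 0) (t (k + 1))) := by
  induction k with
  | zero => exact hg 0 le_rfl
  | succ k ih =>
    have ht' : MonotoneOn t (Iic (k + 1)) := ht.mono (Iic_subset_Iic.2 (by omega))
    have hlow : ContinuousOn (glueIcc t g (k + 1)) (Icc (t 0) (t (k + 1))) :=
      (ih ht' (fun i hi => hmatch i (by omega)) (fun i hi => hg i (by omega))).congr
        fun y hy => by simp only [glueIcc, if_pos hy.2]
    have hhigh : ContinuousOn (glueIcc t g (k + 1)) (Icc (t (k + 1)) (t (k + 1 + 1))) :=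
      (hg (k + 1) le_rfl).congr (glueIcc_eqOn ht hmatch le_rfl)
    rw [← Icc_union_Icc_eq_Icc (a := t 0) (b := t (k + 1)) (c := t (k + 1 + 1))
      (ht (mem_Iic.2 (by omega)) (mem_Iic.2 (by omega)) (by omega))
      (ht (mem_Iic.2 (by omega)) (mem_Iic.2 (by omega)) (by omega))]
    exact hlow.union_of_isClosed hhigh isClosed_Icc isClosed_Icc

theorem exists_continuousOn_Icc_eqOn_pieces [TopologicalSpace X] {N : ℕ} (hN : 0 < N)
    (ht : MonotoneOn t (Iic N))
    (hg : ∀ j < N, ContinuousOn (g j) (Icc (t j) (t (j + 1))))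
    (hmatch : ∀ j, j + 1 < N → g j (t (j + 1)) = g (j + 1) (t (j + 1))) :
    ∃ G : ℝ → X, ContinuousOn G (Icc (t 0) (t N)) ∧
      ∀ j < N, EqOn G (g j) (Icc (t j) (t (j + 1))) := by
  obtain ⟨k, rfl⟩ : ∃ k, N = k + 1 := ⟨N - 1, by omega⟩
  exact ⟨glueIcc t g k, continuousOn_glueIcc ht (fun j hj => hmatch j (by omega))
    (fun j hj => hg j (by omega)),
    fun j hj => glueIcc_eqOn ht (fun i hi => hmatch i (by omega)) (by omega)⟩

end Gluing

theorem lipschitzWith_one_of_abs_sub_lt {s : ℝ → ℝ} (hs : ∀ x y, x ≠ y → |s x - s y| < |x - y|) :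
    LipschitzWith 1 s :=
  LipschitzWith.of_dist_le_mul fun x y => by
    rcases eq_or_ne x y with rfl | hxy
    · simp
    · simpa [Real.dist_eq] using (hs x y hxy).le

theorem continuousOn_rbMap {S : Set ℝ} {b c d e p q s r : ℝ → ℝ} {h : ℝ → ℝ × ℝ}
    (hcoef : ∀ g ∈ [b, c, d, e, p, q], ContinuousOn g S) (hs : Continuous s) (hr : Continuous r)
    (hh : ContinuousOn h S) :
    ContinuousOn (fun x => (b x * s (h x).1 + c x * r (h x).2 + p x,
      d x * s (h x).1 + e x * r (h x).2 + q x)) S := by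
  simp only [List.mem_cons, List.not_mem_nil, or_false, forall_eq_or_imp, forall_eq] at hcoef
  obtain ⟨hb, hc, hd, he, hp, hq⟩ := hcoef
  have hsh : ContinuousOn (fun x => s (h x).1) S := hs.comp_continuousOn hh.fst
  have hrh : ContinuousOn (fun x => r (h x).2) S := hr.comp_continuousOn hh.snd
  fun_prop

theorem exists_continuousOn_comp_affine_eq {X : Type*} [TopologicalSpace X] {K : ℝ → X}
    {L : ℝ → ℝ} {a f x₀ x₁ : ℝ} (hL : ∀ x, L x = a * x + f) (hx : x₀ < x₁) (hLx : L x₀ < L x₁)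
    (hK : ContinuousOn K (Icc x₀ x₁)) :
    MapsTo L (Icc x₀ x₁) (Icc (L x₀) (L x₁)) ∧
      ∃ g : ℝ → X, ContinuousOn g (Icc (L x₀) (L x₁)) ∧ ∀ x, g (L x) = K x := by
  have ha : 0 < a := by
    rw [hL, hL] at hLx
    nlinarith
  set Linv : ℝ → ℝ := fun y => (y - f) / a
  have hLinv : ∀ x, Linv (L x) = x := fun x => by simp [Linv, hL, ha.ne']
  have hLmono : Monotone L := fun x y hxy => by rw [hL, hL]; gcongr
  have hLinvmono : Monotone Linv := fun x y hxy => by simp only [Linv]; gcongr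
  refine ⟨hLmono.mapsTo_Icc, K ∘ Linv, ?_, fun x => congrArg K (hLinv x)⟩
  have hmaps : MapsTo Linv (Icc (L x₀) (L x₁)) (Icc x₀ x₁) := by
    simpa only [hLinv] using hLinvmono.mapsTo_Icc (a := L x₀) (b := L x₁)
  exact hK.comp (by fun_prop) hmaps

theorem exists_continuousOn_comp_affine_pieces {X : Type*} [TopologicalSpace X] {N : ℕ}
    (hN : 0 < N) {t : ℕ → ℝ} (ht : ∀ j < N, t j < t (j + 1)) {a f : ℕ → ℝ} {L : ℕ → ℝ → ℝ}
    (hL : ∀ j < N, ∀ x, L j x = a j * x + f j) (hL0 : ∀ j < N, L j (t 0) = t j)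
    (hLN : ∀ j < N, L j (t N) = t (j + 1)) {K : ℕ → ℝ → X}
    (hK : ∀ j < N, ContinuousOn (K j) (Icc (t 0) (t N)))
    (hmatch : ∀ j, j + 1 < N → K j (t N) = K (j + 1) (t 0)) :
    ∃ G : ℝ → X, ContinuousOn G (Icc (t 0) (t N)) ∧
      ∀ j < N, ∀ x ∈ Icc (t 0) (t N), G (L j x) = K j x := by
  have htN : StrictMonoOn t (Iic N) := strictMonoOn_Iic_of_lt_succ ht
  have hpiece : ∀ j < N, MapsTo (L j) (Icc (t 0) (t N)) (Icc (t j) (t (j + 1))) ∧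
      ∃ g : ℝ → X, ContinuousOn g (Icc (t j) (t (j + 1))) ∧ ∀ x, g (L j x) = K j x := by
    intro j hj
    rw [← hL0 j hj, ← hLN j hj]
    refine exists_continuousOn_comp_affine_eq (hL j hj) ?_ ?_ (hK j hj)
    · exact htN (mem_Iic.2 (Nat.zero_le N)) (mem_Iic.2 le_rfl) hN
    · rw [hL0 j hj, hLN j hj]
      exact ht j hj
  have : Nonempty X := ⟨K 0 (t 0)⟩
  choose! g hgc hgL using fun j hj => (hpiece j hj).2
  obtain ⟨G, hGc, hGg⟩ := exists_continuousOn_Icc_eqOn_pieces hN htN.monotoneOn hgc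
    fun j hj => calc
      g j (t (j + 1)) = K j (t N) := by rw [← hLN j (by omega), hgL j (by omega)]
      _ = K (j + 1) (t 0) := hmatch j hj
      _ = g (j + 1) (t (j + 1)) := by rw [← hL0 (j + 1) hj, hgL (j + 1) hj]
  exact ⟨G, hGc, fun j hj x hx => by rw [hGg j hj ((hpiece j hj).1 hx), hgL j hj]⟩

theorem RB_maps_Ce_into_Cd_general
    (N : ℕ) (hN : 0 < N)
    (t v w : ℕ → ℝ)
    (htmono : ∀ j, j < N → t j < t (j + 1))
    (a fc : ℕ → ℝ) (L : ℕ → ℝ → ℝ)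
    (hL : ∀ j, 1 ≤ j → j ≤ N → ∀ x : ℝ, L j x = a j * x + fc j)
    (hL0 : ∀ j, 1 ≤ j → j ≤ N → L j (t 0) = t (j - 1))
    (hLN : ∀ j, 1 ≤ j → j ≤ N → L j (t N) = t j)
    (b c d e p q : ℕ → ℝ → ℝ)
    (hLip : ∀ j, 1 ≤ j → j ≤ N → ∀ g ∈ ([b j, c j, d j, e j, p j, q j] : List (ℝ → ℝ)),
      ∃ Kg : NNReal, LipschitzOnWith Kg g (Set.Icc (t 0) (t N)))
    (s r : ℕ → ℝ → ℝ)
    (hs : ∀ j, 1 ≤ j → j ≤ N → ∀ x y : ℝ, x ≠ y → |s j x - s j y| < |x - y|)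
    (hr : ∀ j, 1 ≤ j → j ≤ N → ∀ x y : ℝ, x ≠ y → |r j x - r j y| < |x - y|)
    (F : ℕ → ℝ → ℝ × ℝ → ℝ × ℝ)
    (hF : ∀ j x vw, F j x vw = (b j x * s j vw.1 + c j x * r j vw.2 + p j x,
                                d j x * s j vw.1 + e j x * r j vw.2 + q j x))
    (hF0 : ∀ j, 1 ≤ j → j ≤ N → F j (t 0) (v 0, w 0) = (v (j - 1), w (j - 1)))
    (hFN : ∀ j, 1 ≤ j → j ≤ N → F j (t N) (v N, w N) = (v j, w j))
    (h : ℝ → ℝ × ℝ) (hhc : ContinuousOn h (Set.Icc (t 0) (t N)))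
    (hh0 : h (t 0) = (v 0, w 0)) (hhN : h (t N) = (v N, w N)) :
    ∃ Rh : ℝ → ℝ × ℝ, ContinuousOn Rh (Set.Icc (t 0) (t N)) ∧
      (∀ j, 1 ≤ j → j ≤ N → ∀ x ∈ Set.Icc (t 0) (t N), Rh (L j x) = F j x (h x)) ∧
      (∀ j, j ≤ N → Rh (t j) = (v j, w j)) := by
  have hK : ∀ j < N, ContinuousOn (fun x => F (j + 1) x (h x)) (Icc (t 0) (t N)) := by
    intro j hj
    simp only [hF]
    exact continuousOn_rbMap (fun g hg => (hLip _ (by omega) hj g hg).choose_spec.continuousOn)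
      (lipschitzWith_one_of_abs_sub_lt (hs _ (by omega) hj)).continuous
      (lipschitzWith_one_of_abs_sub_lt (hr _ (by omega) hj)).continuous hhc
  have hL0' : ∀ j < N, L (j + 1) (t 0) = t j := fun j hj => hL0 _ (by omega) hj
  have hLN' : ∀ j < N, L (j + 1) (t N) = t (j + 1) := fun j hj => hLN _ (by omega) hj
  obtain ⟨Rh, hRc, hReq⟩ := exists_continuousOn_comp_affine_pieces hN htmono
    (fun j hj => hL (j + 1) (by omega) hj) hL0' hLN' hK fun j hj => by
      rw [hhN, hh0, hFN _ (by omega) (by omega)]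
      exact (hF0 (j + 2) (by omega) hj).symm
  refine ⟨Rh, hRc, fun j hj1 hjN x hx => ?_, fun j hjN => ?_⟩
  · obtain ⟨i, rfl⟩ : ∃ i, j = i + 1 := ⟨j - 1, by omega⟩
    exact hReq i hjN x hx
  · have hI : t 0 ≤ t N := (strictMonoOn_Iic_of_lt_succ htmono).monotoneOn
      (mem_Iic.2 (Nat.zero_le N)) (mem_Iic.2 le_rfl) (Nat.zero_le N)
    rcases j with _ | i
    · rw [← hL0' 0 hN, hReq 0 hN _ ⟨le_rfl, hI⟩, hh0]
      exact hF0 1 le_rfl hN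
    · rw [← hLN' i hjN, hReq i hjN _ ⟨hI, le_rfl⟩, hhN]
      exact hFN (i + 1) (by omega) hjN

/-- For `h ∈ C_e(I)`, the Read–Bajraktarević image `Rh` is a well-defined continuous
function on `I = [t 0, t N]` satisfying `Rh (L j x) = F j x (h x)` on each piece and
interpolating all the data points, i.e. `Rh ∈ C_d(I)`. -/
theorem RB_maps_Ce_into_Cd
    (N : ℕ) (hN : 0 < N)
    (t v w : ℕ → ℝ)
    (htmono : ∀ j, j < N → t j < t (j + 1))
    (a fc : ℕ → ℝ) (L : ℕ → ℝ → ℝ)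
    (hL : ∀ j, 1 ≤ j → j ≤ N → ∀ x : ℝ, L j x = a j * x + fc j)
    (ha : ∀ j, 1 ≤ j → j ≤ N → a j ≠ 0 ∧ |a j| < 1)
    (hL0 : ∀ j, 1 ≤ j → j ≤ N → L j (t 0) = t (j - 1))
    (hLN : ∀ j, 1 ≤ j → j ≤ N → L j (t N) = t j)
    (b c d e p q : ℕ → ℝ → ℝ)
    (hLip : ∀ j, 1 ≤ j → j ≤ N → ∀ g ∈ ([b j, c j, d j, e j, p j, q j] : List (ℝ → ℝ)),
      ∃ Kg : NNReal, LipschitzOnWith Kg g (Set.Icc (t 0) (t N)))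
    (hbd : ∀ j, 1 ≤ j → j ≤ N → ∃ B D : ℝ, B + D ≤ 1 ∧
      (∀ x ∈ Set.Icc (t 0) (t N), |b j x| ≤ B) ∧ (∀ x ∈ Set.Icc (t 0) (t N), |d j x| ≤ D))
    (hce : ∀ j, 1 ≤ j → j ≤ N → ∃ C E : ℝ, C + E ≤ 1 ∧
      (∀ x ∈ Set.Icc (t 0) (t N), |c j x| ≤ C) ∧ (∀ x ∈ Set.Icc (t 0) (t N), |e j x| ≤ E))
    (s r : ℕ → ℝ → ℝ)
    (hs : ∀ j, 1 ≤ j → j ≤ N → ∀ x y : ℝ, x ≠ y → |s j x - s j y| < |x - y|)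
    (hr : ∀ j, 1 ≤ j → j ≤ N → ∀ x y : ℝ, x ≠ y → |r j x - r j y| < |x - y|)
    (F : ℕ → ℝ → ℝ × ℝ → ℝ × ℝ)
    (hF : ∀ j x vw, F j x vw = (b j x * s j vw.1 + c j x * r j vw.2 + p j x,
                                d j x * s j vw.1 + e j x * r j vw.2 + q j x))
    (hF0 : ∀ j, 1 ≤ j → j ≤ N → F j (t 0) (v 0, w 0) = (v (j - 1), w (j - 1)))
    (hFN : ∀ j, 1 ≤ j → j ≤ N → F j (t N) (v N, w N) = (v j, w j))
    (h : ℝ → ℝ × ℝ) (hhc : ContinuousOn h (Set.Icc (t 0) (t N)))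
    (hh0 : h (t 0) = (v 0, w 0)) (hhN : h (t N) = (v N, w N)) :
    ∃ Rh : ℝ → ℝ × ℝ, ContinuousOn Rh (Set.Icc (t 0) (t N)) ∧
      (∀ j, 1 ≤ j → j ≤ N → ∀ x ∈ Set.Icc (t 0) (t N), Rh (L j x) = F j x (h x)) ∧
      (∀ j, j ≤ N → Rh (t j) = (v j, w j)) :=
  RB_maps_Ce_into_Cd_general N hN t v w htmono a fc L hL hL0 hLN b c d e p q hLip s r hs hr F hF hF0
    hFN h hhc hh0 hhN
end

section
/- The Read–Bajraktarević operator R : C_e(I) → C_e(I), (Rh)(t) = F_j(L_j⁻¹(t), h(L_j⁻¹(t))) for t ∈ I_j, has a fixed point f ∈ C_d(I): a continuous vector-valued function f : I → ℝ² satisfying f(L_j(t)) = F_j(t, f(t)) for all t ∈ I and j = 1,…,N, and f(t_j) = (v_j, w_j) for all j = 0, 1,…, N. -/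
/-!
In the `ℓ¹` norm on `ℝ²` the bounds `‖b_j‖ + ‖d_j‖ ≤ 1`, `‖c_j‖ + ‖e_j‖ ≤ 1` make every
`F_j(x, ·)` an Edelstein contraction. Such maps need not be contractions, but on a
compact set a continuous family of them is uniformly contracting away from the diagonal:
for every `ε > 0` there is `l < 1` with `dist (F x w) (F x w') ≤ l * dist w w'` whenever
`ε ≤ dist w w'` (Rakotch). This modulus passes to the Read–Bajraktarević operator on the
complete space of continuous maps `I → A` pinned at the two ends, where `A` is a closed
thickening of `K`, and Rakotch's theorem gives a fixed point; the pinning conditions glue the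
pieces continuously at the knots and force the interpolation conditions.
-/

open Set Filter Topology Metric Function WithLp

section Rakotch

variable {X : Type*} [MetricSpace X] {T : X → X}

theorem lipschitzWith_one_of_dist_lt {Y : Type*} [MetricSpace Y] {f : X → Y}
    (hf : ∀ x y, x ≠ y → dist (f x) (f y) < dist x y) : LipschitzWith 1 f :=
  LipschitzWith.of_dist_le_mul fun x y => by
    rcases eq_or_ne x y with rfl | hxy
    · simp
    · simpa using (hf x y hxy).le

theorem lipschitzWith_one_of_forall_dist_le_mul
    (hT : ∀ ε > 0, ∀ᶠ l in 𝓝[<] 1, ∀ x y, ε ≤ dist x y → dist (T x) (T y) ≤ l * dist x y) :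
    LipschitzWith 1 T :=
  lipschitzWith_one_of_dist_lt fun x y hxy => by
    obtain ⟨l, hl, hl1⟩ := ((hT _ (dist_pos.2 hxy)).and self_mem_nhdsWithin).exists
    exact (hl x y le_rfl).trans_lt (mul_lt_of_lt_one_left (dist_pos.2 hxy) hl1)

variable {ε l : ℝ}

theorem dist_le_max_mul (hT1 : LipschitzWith 1 T)
    (hT : ∀ x y, ε ≤ dist x y → dist (T x) (T y) ≤ l * dist x y) (x y : X) :
    dist (T x) (T y) ≤ max (l * dist x y) ε := by
  rcases le_or_gt ε (dist x y) with h | h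
  · exact (hT x y h).trans (le_max_left _ _)
  · exact (hT1.dist_le_mul x y).trans (by simpa using h.le.trans (le_max_right _ _))

theorem dist_iterate_le_max (hε : 0 ≤ ε) (hl : 0 ≤ l) (hl1 : l ≤ 1) (hT1 : LipschitzWith 1 T)
    (hT : ∀ x y, ε ≤ dist x y → dist (T x) (T y) ≤ l * dist x y) (n : ℕ) (x y : X) :
    dist (T^[n] x) (T^[n] y) ≤ max (l ^ n * dist x y) ε := by
  induction n with
  | zero => simp
  | succ n ih =>
    rw [iterate_succ_apply', iterate_succ_apply']
    refine (dist_le_max_mul hT1 hT _ _).trans (max_le ?_ (le_max_right _ _))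
    calc l * dist (T^[n] x) (T^[n] y) ≤ l * max (l ^ n * dist x y) ε := by gcongr
      _ = max (l ^ (n + 1) * dist x y) (l * ε) := by
        rw [mul_max_of_nonneg _ _ hl, pow_succ', mul_assoc]
      _ ≤ max (l ^ (n + 1) * dist x y) ε := max_le_max le_rfl (mul_le_of_le_one_left hε hl1)

theorem dist_iterate_self_le (hε : 0 ≤ ε) (hl : 0 ≤ l) (hl1 : l < 1) (hT1 : LipschitzWith 1 T)
    (hT : ∀ x y, ε ≤ dist x y → dist (T x) (T y) ≤ l * dist x y) (n : ℕ) (x : X) :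
    dist (T^[n] x) x ≤ ε + dist (T x) x / (1 - l) := by
  have hc : dist (T x) x ≤ dist (T x) x / (1 - l) :=
    le_div_self dist_nonneg (by linarith) (by linarith)
  induction n with
  | zero => simpa using add_nonneg hε (hc.trans' dist_nonneg)
  | succ n ih =>
    rw [iterate_succ_apply']
    have hc' : l * (dist (T x) x / (1 - l)) + dist (T x) x = dist (T x) x / (1 - l) := by
      field_simp [(by linarith : (1 - l) ≠ 0)]; ring
    calc dist (T (T^[n] x)) x ≤ dist (T (T^[n] x)) (T x) + dist (T x) x := dist_triangle _ _ _
      _ ≤ max (l * dist (T^[n] x) x) ε + dist (T x) x := by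
        gcongr; exact dist_le_max_mul hT1 hT _ _
      _ ≤ ε + dist (T x) x / (1 - l) := by
        rcases le_total (l * dist (T^[n] x) x) ε with h | h
        · rw [max_eq_right h]; linarith
        · rw [max_eq_left h]; nlinarith

theorem exists_isFixedPt_of_forall_dist_le_mul [CompleteSpace X] [Nonempty X]
    (hT : ∀ ε > 0, ∀ᶠ l in 𝓝[<] 1, ∀ x y, ε ≤ dist x y → dist (T x) (T y) ≤ l * dist x y) :
    ∃ x, IsFixedPt T x := by
  have hT1 := lipschitzWith_one_of_forall_dist_le_mul hT
  obtain ⟨x₀⟩ := ‹Nonempty X›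
  have hcauchy : CauchySeq fun n => T^[n] x₀ := by
    refine Metric.cauchySeq_iff'.2 fun δ hδ => ?_
    obtain ⟨l, hl, hl0, hl1⟩ :=
      ((hT (δ / 2) (by positivity)).and (Ioo_mem_nhdsLT zero_lt_one)).exists
    set B := δ / 2 + dist (T x₀) x₀ / (1 - l)
    have hB : 0 < B := by have := sub_pos.2 hl1; positivity
    obtain ⟨N, hN⟩ := exists_pow_lt_of_lt_one (div_pos hδ hB) hl1
    refine ⟨N, fun n hn => ?_⟩
    obtain ⟨k, rfl⟩ := Nat.exists_eq_add_of_le hn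
    calc dist (T^[N + k] x₀) (T^[N] x₀)
        = dist (T^[N] (T^[k] x₀)) (T^[N] x₀) := by rw [iterate_add_apply]
      _ ≤ max (l ^ N * dist (T^[k] x₀) x₀) (δ / 2) :=
        dist_iterate_le_max (by positivity) hl0.le hl1.le hT1 hl N _ _
      _ < δ := by
        refine max_lt ?_ (by linarith)
        calc l ^ N * dist (T^[k] x₀) x₀ ≤ l ^ N * B := by
              gcongr; exact dist_iterate_self_le (by positivity) hl0.le hl1 hT1 hl k x₀
          _ < δ := by rwa [← lt_div_iff₀ hB]
  obtain ⟨x, hx⟩ := cauchySeq_tendsto_of_complete hcauchy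
  exact ⟨x, isFixedPt_of_tendsto_iterate hx hT1.continuous.continuousAt⟩

end Rakotch

theorem IsCompact.eventually_forall_dist_le_mul {P α β : Type*} [TopologicalSpace P]
    [MetricSpace α] [MetricSpace β] {Φ : P → α → β} {Q : Set P} {A : Set α}
    (hQ : IsCompact Q) (hA : IsCompact A) (hΦ : ContinuousOn (uncurry Φ) (Q ×ˢ A))
    (hlt : ∀ p ∈ Q, ∀ x ∈ A, ∀ y ∈ A, x ≠ y → dist (Φ p x) (Φ p y) < dist x y)
    {ε : ℝ} (hε : 0 < ε) :
    ∀ᶠ l in 𝓝[<] 1, ∀ p ∈ Q, ∀ x ∈ A, ∀ y ∈ A, ε ≤ dist x y →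
      dist (Φ p x) (Φ p y) ≤ l * dist x y := by
  set C := (Q ×ˢ A ×ˢ A) ∩ {q | ε ≤ dist q.2.1 q.2.2}
  set ρ : P × α × α → ℝ := fun q => dist (Φ q.1 q.2.1) (Φ q.1 q.2.2) / dist q.2.1 q.2.2
  have hpos : ∀ q ∈ C, 0 < dist q.2.1 q.2.2 := fun q hq => hε.trans_le hq.2
  obtain ⟨μ, hμ, hρ⟩ : ∃ μ < 1, ∀ q ∈ C, ρ q ≤ μ := by
    rcases C.eq_empty_or_nonempty with hC | hC
    · exact ⟨0, zero_lt_one, by simp [hC]⟩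
    have hCc : IsCompact C := (hQ.prod (hA.prod hA)).inter_right <|
      isClosed_le continuous_const (continuous_snd.fst.dist continuous_snd.snd)
    have hρc : ContinuousOn ρ C := by
      refine ContinuousOn.div (continuous_dist.comp_continuousOn (ContinuousOn.prodMk ?_ ?_))
        (by fun_prop : Continuous fun q : P × α × α => dist q.2.1 q.2.2).continuousOn
        fun q hq => (hpos q hq).ne'
      · exact hΦ.comp (by fun_prop : Continuous fun q : P × α × α => (q.1, q.2.1)).continuousOn
          fun q hq => ⟨hq.1.1, hq.1.2.1⟩
      · exact hΦ.comp (by fun_prop : Continuous fun q : P × α × α => (q.1, q.2.2)).continuousOn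
          fun q hq => ⟨hq.1.1, hq.1.2.2⟩
    obtain ⟨q, hq, hmax⟩ := hCc.exists_isMaxOn hC hρc
    refine ⟨ρ q, (div_lt_one (hpos q hq)).2 ?_, fun q' hq' => hmax hq'⟩
    exact hlt _ hq.1.1 _ hq.1.2.1 _ hq.1.2.2 (dist_pos.1 (hpos q hq))
  filter_upwards [Ioo_mem_nhdsLT hμ] with l hl p hp x hx y hy hxy
  have hd : 0 < dist x y := hε.trans_le hxy
  calc dist (Φ p x) (Φ p y) ≤ μ * dist x y :=
        (div_le_iff₀ hd).1 (hρ (p, x, y) ⟨⟨hp, hx, hy⟩, hxy⟩)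
    _ ≤ l * dist x y := by gcongr; exact hl.1.le

theorem mapsTo_cthickening {α : Type*} [PseudoMetricSpace α] {f : α → α} {K : Set α} {δ : ℝ}
    (hK : IsCompact K) (hδ : 0 ≤ δ) (hf : LipschitzWith 1 f) (hfK : MapsTo f K K) :
    MapsTo f (cthickening δ K) (cthickening δ K) := by
  rw [hK.cthickening_eq_biUnion_closedBall hδ]
  intro x hx
  obtain ⟨k, hk, hxk⟩ := mem_iUnion₂.1 hx
  exact mem_iUnion₂.2 ⟨f k, hfK hk, (hf.dist_le_mul x k).trans (by simpa using hxk)⟩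

theorem lineMap_mem_cthickening {V : Type*} [NormedAddCommGroup V] [NormedSpace ℝ V] {K : Set V}
    {u : V} (hu : u ∈ K) (v : V) {θ : ℝ} (hθ : θ ∈ Icc 0 1) :
    AffineMap.lineMap u v θ ∈ cthickening (dist u v) K :=
  mem_cthickening_of_dist_le _ u _ _ hu <| by
    rw [dist_lineMap_left, Real.norm_eq_abs, abs_of_nonneg hθ.1]
    exact mul_le_of_le_one_left dist_nonneg hθ.2

section PinnedMaps

variable {E : Type*} [TopologicalSpace E] {a b : ℝ} (hab : a ≤ b) {A : Set E} {u v : E}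

def pinnedMaps (A : Set E) (u v : E) : Set C(Icc a b, E) :=
  {g | IccExtend hab g a = u} ∩ {g | IccExtend hab g b = v} ∩
    ⋂ x, (fun g : C(Icc a b, E) => g x) ⁻¹' A

theorem isClosed_pinnedMaps [T2Space E] (hA : IsClosed A) : IsClosed (pinnedMaps hab A u v) :=
  ((isClosed_eq (continuous_eval_const _) continuous_const).inter
    (isClosed_eq (continuous_eval_const _) continuous_const)).inter
    (isClosed_iInter fun x => hA.preimage (continuous_eval_const x))

theorem mk_mem_pinnedMaps {F : ℝ → E} (hF : ContinuousOn F (Icc a b)) (hFa : F a = u)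
    (hFb : F b = v) (hFA : MapsTo F (Icc a b) A) :
    (⟨(Icc a b).domRestrict F, hF.domRestrict⟩ : C(Icc a b, E)) ∈ pinnedMaps hab A u v :=
  ⟨⟨(IccExtend_left hab _).trans hFa, (IccExtend_right hab _).trans hFb⟩,
    mem_iInter.2 fun x => hFA x.2⟩

theorem IccExtend_of_mem_pinnedMaps {g : C(Icc a b, E)} (hg : g ∈ pinnedMaps hab A u v) :
    IccExtend hab g a = u ∧ IccExtend hab g b = v ∧ MapsTo (IccExtend hab g) (Icc a b) A :=
  ⟨hg.1.1, hg.1.2, fun y hy => by rw [IccExtend_of_mem _ _ hy]; exact mem_iInter.1 hg.2 _⟩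

end PinnedMaps

section Knots

variable {t : ℕ → ℝ} {N : ℕ}

theorem exists_mem_Icc_knots (hN : 0 < N) (ht : MonotoneOn t (Iic N)) {y : ℝ}
    (hy : y ∈ Icc (t 0) (t N)) : ∃ j ∈ Icc 1 N, y ∈ Icc (t (j - 1)) (t j) := by
  classical
  have hex : ∃ k, y ≤ t k := ⟨N, hy.2⟩
  set k := Nat.find hex
  have hkN : k ≤ N := Nat.find_min' hex hy.2
  rcases Nat.eq_zero_or_pos k with hk | hk
  · have h0 : y ≤ t 0 := hk ▸ Nat.find_spec hex
    exact ⟨1, ⟨le_rfl, hN⟩, hy.1, h0.trans (ht (by simp) (mem_Iic.2 hN) zero_le_one)⟩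
  · refine ⟨k, ⟨hk, hkN⟩, ?_, Nat.find_spec hex⟩
    exact (not_le.1 (Nat.find_min hex (Nat.sub_lt hk one_pos))).le

theorem eq_of_mem_Icc_knots (ht : StrictMonoOn t (Iic N)) {j k : ℕ} {y : ℝ} (hkN : k ≤ N)
    (hjk : j < k) (hyj : y ≤ t j) (hyk : t (k - 1) ≤ y) : k = j + 1 ∧ y = t j := by
  have hmem : j ∈ Iic N := by simp only [mem_Iic]; omega
  have hmem' : k - 1 ∈ Iic N := by simp only [mem_Iic]; omega
  have hle : t j ≤ t (k - 1) := ht.monotoneOn hmem hmem' (by omega)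
  have heq : t j = t (k - 1) := le_antisymm hle (hyk.trans hyj)
  exact ⟨by have := ht.injOn hmem hmem' heq; omega, le_antisymm hyj (hle.trans hyk)⟩

theorem Icc_knots_subset (ht : MonotoneOn t (Iic N)) {j : ℕ} (hj : j ∈ Icc 1 N) :
    Icc (t (j - 1)) (t j) ⊆ Icc (t 0) (t N) :=
  Icc_subset_Icc (ht (by simp) (mem_Iic.2 (by have := hj.2; omega)) (Nat.zero_le _))
    (ht (mem_Iic.2 hj.2) (by simp) hj.2)

noncomputable def knotIndex (t : ℕ → ℝ) (N : ℕ) (y : ℝ) : ℕ :=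
  sInf {j | j ∈ Icc 1 N ∧ y ∈ Icc (t (j - 1)) (t j)}

theorem knotIndex_spec (hN : 0 < N) (ht : MonotoneOn t (Iic N)) {y : ℝ}
    (hy : y ∈ Icc (t 0) (t N)) :
    knotIndex t N y ∈ Icc 1 N ∧ y ∈ Icc (t (knotIndex t N y - 1)) (t (knotIndex t N y)) :=
  Nat.sInf_mem (exists_mem_Icc_knots hN ht hy)

end Knots

section ReadBajraktarevic

variable {E : Type*}

/-- The maps `L j x = a j * x + fc j` send `[t 0, t N]` onto `[t (j - 1), t j]`, and the maps
`Φ j` are compatible with the data `z` at the knots. -/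
structure IsInterpolationSystem (t : ℕ → ℝ) (N : ℕ) (a fc : ℕ → ℝ) (Φ : ℕ → ℝ → E → E)
    (z : ℕ → E) : Prop where
  pos : 0 < N
  strictMonoOn : StrictMonoOn t (Iic N)
  affine_left : ∀ j ∈ Icc 1 N, a j * t 0 + fc j = t (j - 1)
  affine_right : ∀ j ∈ Icc 1 N, a j * t N + fc j = t j
  map_left : ∀ j ∈ Icc 1 N, Φ j (t 0) (z 0) = z (j - 1)
  map_right : ∀ j ∈ Icc 1 N, Φ j (t N) (z N) = z j

/-- `y ↦ Φ j x (g x)` with `x = L_j⁻¹ y`. -/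
noncomputable def rbPiece (a fc : ℕ → ℝ) (Φ : ℕ → ℝ → E → E) (g : ℝ → E) (j : ℕ) (y : ℝ) : E :=
  Φ j ((y - fc j) / a j) (g ((y - fc j) / a j))

/-- At an interior knot two pieces apply; they agree on maps taking the values `z 0` and `z N` at
the ends (`rbPiece_eq_of_lt`), so the choice made by `knotIndex` is immaterial. -/
noncomputable def rbOperator (t : ℕ → ℝ) (N : ℕ) (a fc : ℕ → ℝ) (Φ : ℕ → ℝ → E → E)
    (g : ℝ → E) (y : ℝ) : E :=
  rbPiece a fc Φ g (knotIndex t N y) y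

variable {t a fc : ℕ → ℝ} {N : ℕ} {Φ : ℕ → ℝ → E → E} {z : ℕ → E}

theorem rbPiece_affine {j : ℕ} (ha : a j ≠ 0) (g : ℝ → E) (x : ℝ) :
    rbPiece a fc Φ g j (a j * x + fc j) = Φ j x (g x) := by
  simp [rbPiece, ha]

namespace IsInterpolationSystem

theorem slope_pos (h : IsInterpolationSystem t N a fc Φ z) {j : ℕ} (hj : j ∈ Icc 1 N) :
    0 < a j := by
  obtain ⟨hj1, hjN⟩ := hj
  have hj' : t (j - 1) < t j := h.strictMonoOn (mem_Iic.2 (by omega)) (mem_Iic.2 hjN) (by omega)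
  have h0N : t 0 < t N := h.strictMonoOn (by simp) (by simp) h.pos
  nlinarith [h.affine_left j ⟨hj1, hjN⟩, h.affine_right j ⟨hj1, hjN⟩]

theorem monotoneOn (h : IsInterpolationSystem t N a fc Φ z) : MonotoneOn t (Iic N) :=
  h.strictMonoOn.monotoneOn

theorem image_affine (h : IsInterpolationSystem t N a fc Φ z) {j : ℕ} (hj : j ∈ Icc 1 N) :
    (a j * · + fc j) '' Icc (t 0) (t N) = Icc (t (j - 1)) (t j) := by
  rw [image_affine_Icc' (h.slope_pos hj), h.affine_left j hj, h.affine_right j hj]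

theorem mapsTo_affine_inv (h : IsInterpolationSystem t N a fc Φ z) {j : ℕ} (hj : j ∈ Icc 1 N) :
    MapsTo (fun y => (y - fc j) / a j) (Icc (t (j - 1)) (t j)) (Icc (t 0) (t N)) := by
  rw [← h.image_affine hj]
  rintro _ ⟨x, hx, rfl⟩
  simpa [(h.slope_pos hj).ne'] using hx

variable {g : ℝ → E} {A : Set E}

theorem rbPiece_knot_left (h : IsInterpolationSystem t N a fc Φ z) (hg0 : g (t 0) = z 0)
    {j : ℕ} (hj : j ∈ Icc 1 N) : rbPiece a fc Φ g j (t (j - 1)) = z (j - 1) := by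
  rw [← h.affine_left j hj, rbPiece_affine (h.slope_pos hj).ne', hg0, h.map_left j hj]

theorem rbPiece_knot_right (h : IsInterpolationSystem t N a fc Φ z) (hgN : g (t N) = z N)
    {j : ℕ} (hj : j ∈ Icc 1 N) : rbPiece a fc Φ g j (t j) = z j := by
  rw [← h.affine_right j hj, rbPiece_affine (h.slope_pos hj).ne', hgN, h.map_right j hj]

theorem rbPiece_eq_of_lt (h : IsInterpolationSystem t N a fc Φ z) (hg0 : g (t 0) = z 0)
    (hgN : g (t N) = z N) {j k : ℕ} {y : ℝ} (hj : j ∈ Icc 1 N) (hk : k ∈ Icc 1 N) (hjk : j < k)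
    (hyj : y ∈ Icc (t (j - 1)) (t j)) (hyk : y ∈ Icc (t (k - 1)) (t k)) :
    rbPiece a fc Φ g j y = rbPiece a fc Φ g k y := by
  obtain ⟨rfl, rfl⟩ := eq_of_mem_Icc_knots h.strictMonoOn hk.2 hjk hyj.2 hyk.1
  rw [h.rbPiece_knot_right hgN hj]
  simpa using (h.rbPiece_knot_left hg0 hk).symm

theorem rbOperator_eq_rbPiece (h : IsInterpolationSystem t N a fc Φ z) (hg0 : g (t 0) = z 0)
    (hgN : g (t N) = z N) {j : ℕ} {y : ℝ} (hj : j ∈ Icc 1 N) (hy : y ∈ Icc (t (j - 1)) (t j)) :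
    rbOperator t N a fc Φ g y = rbPiece a fc Φ g j y := by
  obtain ⟨hk, hyk⟩ := knotIndex_spec h.pos h.monotoneOn (Icc_knots_subset h.monotoneOn hj hy)
  rcases lt_trichotomy (knotIndex t N y) j with hlt | heq | hgt
  · exact h.rbPiece_eq_of_lt hg0 hgN hk hj hlt hyk hy
  · rw [rbOperator, heq]
  · exact (h.rbPiece_eq_of_lt hg0 hgN hj hk hgt hy hyk).symm

theorem rbOperator_left (h : IsInterpolationSystem t N a fc Φ z) (hg0 : g (t 0) = z 0)
    (hgN : g (t N) = z N) : rbOperator t N a fc Φ g (t 0) = z 0 := by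
  have h1 : 1 ∈ Icc 1 N := ⟨le_rfl, h.pos⟩
  have hmem : t 0 ∈ Icc (t (1 - 1)) (t 1) :=
    left_mem_Icc.2 (h.monotoneOn (by simp) (mem_Iic.2 h.pos) zero_le_one)
  simpa [h.rbOperator_eq_rbPiece hg0 hgN h1 hmem] using h.rbPiece_knot_left hg0 h1

theorem rbOperator_right (h : IsInterpolationSystem t N a fc Φ z) (hg0 : g (t 0) = z 0)
    (hgN : g (t N) = z N) : rbOperator t N a fc Φ g (t N) = z N := by
  have hN : N ∈ Icc 1 N := ⟨h.pos, le_rfl⟩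
  have hmem : t N ∈ Icc (t (N - 1)) (t N) :=
    right_mem_Icc.2 (h.monotoneOn (mem_Iic.2 (Nat.sub_le N 1)) (mem_Iic.2 le_rfl) (Nat.sub_le N 1))
  rw [h.rbOperator_eq_rbPiece hg0 hgN hN hmem, h.rbPiece_knot_right hgN hN]

theorem apply_affine_of_eqOn (h : IsInterpolationSystem t N a fc Φ z)
    (hf : EqOn (rbOperator t N a fc Φ g) g (Icc (t 0) (t N))) (hg0 : g (t 0) = z 0)
    (hgN : g (t N) = z N) {j : ℕ} (hj : j ∈ Icc 1 N) {x : ℝ} (hx : x ∈ Icc (t 0) (t N)) :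
    g (a j * x + fc j) = Φ j x (g x) := by
  have hy : a j * x + fc j ∈ Icc (t (j - 1)) (t j) := h.image_affine hj ▸ mem_image_of_mem _ hx
  rw [← hf (Icc_knots_subset h.monotoneOn hj hy), h.rbOperator_eq_rbPiece hg0 hgN hj hy,
    rbPiece_affine (h.slope_pos hj).ne']

theorem apply_knot_of_eqOn (h : IsInterpolationSystem t N a fc Φ z)
    (hf : EqOn (rbOperator t N a fc Φ g) g (Icc (t 0) (t N))) (hg0 : g (t 0) = z 0)
    (hgN : g (t N) = z N) {j : ℕ} (hj : j ≤ N) : g (t j) = z j := by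
  rcases Nat.eq_zero_or_pos j with rfl | hj0
  · exact hg0
  have hj' : j ∈ Icc 1 N := ⟨hj0, hj⟩
  have hN : t N ∈ Icc (t 0) (t N) :=
    right_mem_Icc.2 (h.monotoneOn (by simp) (by simp) (Nat.zero_le N))
  rw [← h.affine_right j hj', h.apply_affine_of_eqOn hf hg0 hgN hj' hN, hgN, h.map_right j hj']

theorem mapsTo_rbOperator (h : IsInterpolationSystem t N a fc Φ z)
    (hΦA : ∀ j ∈ Icc 1 N, ∀ x ∈ Icc (t 0) (t N), MapsTo (Φ j x) A A)
    (hgA : MapsTo g (Icc (t 0) (t N)) A) :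
    MapsTo (rbOperator t N a fc Φ g) (Icc (t 0) (t N)) A := fun y hy => by
  obtain ⟨hj, hyj⟩ := knotIndex_spec h.pos h.monotoneOn hy
  have hx := h.mapsTo_affine_inv hj hyj
  exact hΦA _ hj _ hx (hgA hx)

variable [TopologicalSpace E]

theorem continuousOn_rbPiece (h : IsInterpolationSystem t N a fc Φ z) {j : ℕ}
    (hj : j ∈ Icc 1 N) (hΦ : ContinuousOn (uncurry (Φ j)) (Icc (t 0) (t N) ×ˢ A))
    (hg : ContinuousOn g (Icc (t 0) (t N))) (hgA : MapsTo g (Icc (t 0) (t N)) A) :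
    ContinuousOn (rbPiece a fc Φ g j) (Icc (t (j - 1)) (t j)) := by
  have hinv : ContinuousOn (fun y => (y - fc j) / a j) (Icc (t (j - 1)) (t j)) := by fun_prop
  have hm := h.mapsTo_affine_inv hj
  exact hΦ.comp (hinv.prodMk (hg.comp hinv hm)) fun y hy => ⟨hm hy, hgA (hm hy)⟩

theorem continuousOn_rbOperator (h : IsInterpolationSystem t N a fc Φ z)
    (hΦ : ∀ j ∈ Icc 1 N, ContinuousOn (uncurry (Φ j)) (Icc (t 0) (t N) ×ˢ A))
    (hg : ContinuousOn g (Icc (t 0) (t N))) (hg0 : g (t 0) = z 0) (hgN : g (t N) = z N)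
    (hgA : MapsTo g (Icc (t 0) (t N)) A) :
    ContinuousOn (rbOperator t N a fc Φ g) (Icc (t 0) (t N)) := by
  have hcover : Icc (t 0) (t N) ⊆ ⋃ j : Icc 1 N, Icc (t (j - 1)) (t j) := fun y hy => by
    obtain ⟨j, hj, hyj⟩ := exists_mem_Icc_knots h.pos h.monotoneOn hy
    exact mem_iUnion.2 ⟨⟨j, hj⟩, hyj⟩
  refine ((locallyFinite_of_finite _).continuousOn_iUnion (fun _ => isClosed_Icc)
    fun j => ?_).mono hcover
  exact (h.continuousOn_rbPiece j.2 (hΦ j j.2) hg hgA).congr fun y hy =>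
    h.rbOperator_eq_rbPiece hg0 hgN j.2 hy

end IsInterpolationSystem

end ReadBajraktarevic

section ReadBajraktarevicFixedPoint

variable {E : Type*} {t a fc : ℕ → ℝ} {N : ℕ} {Φ : ℕ → ℝ → E → E} {z : ℕ → E}

namespace IsInterpolationSystem

section MetricSpace

variable [MetricSpace E] {A : Set E}

/-- Where `g` and `g'` are `ε / 2`-close the operator moves them by less than `ε / 2 ≤ D / 2`,
hence the factor `l ≥ 1 / 2`. -/
theorem dist_rbOperator_le (h : IsInterpolationSystem t N a fc Φ z) {ε l D : ℝ} (hl : 1 / 2 ≤ l)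
    (hΦlt : ∀ j ∈ Icc 1 N, ∀ x ∈ Icc (t 0) (t N), ∀ w ∈ A, ∀ w' ∈ A, w ≠ w' →
      dist (Φ j x w) (Φ j x w') < dist w w')
    (hΦ : ∀ j ∈ Icc 1 N, ∀ x ∈ Icc (t 0) (t N), ∀ w ∈ A, ∀ w' ∈ A, ε / 2 ≤ dist w w' →
      dist (Φ j x w) (Φ j x w') ≤ l * dist w w')
    {g g' : ℝ → E} (hgA : MapsTo g (Icc (t 0) (t N)) A) (hg'A : MapsTo g' (Icc (t 0) (t N)) A)
    (hD : ∀ x ∈ Icc (t 0) (t N), dist (g x) (g' x) ≤ D) (hεD : ε ≤ D) {y : ℝ}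
    (hy : y ∈ Icc (t 0) (t N)) :
    dist (rbOperator t N a fc Φ g y) (rbOperator t N a fc Φ g' y) ≤ l * D := by
  obtain ⟨hj, hyj⟩ := knotIndex_spec h.pos h.monotoneOn hy
  set j := knotIndex t N y
  set x := (y - fc j) / a j
  have hx : x ∈ Icc (t 0) (t N) := h.mapsTo_affine_inv hj hyj
  change dist (Φ j x (g x)) (Φ j x (g' x)) ≤ l * D
  rcases le_or_gt (ε / 2) (dist (g x) (g' x)) with hfar | hnear
  · calc _ ≤ l * dist (g x) (g' x) := hΦ j hj x hx _ (hgA hx) _ (hg'A hx) hfar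
      _ ≤ l * D := by gcongr; exact hD x hx
  · have hle : dist (Φ j x (g x)) (Φ j x (g' x)) ≤ dist (g x) (g' x) := by
      rcases eq_or_ne (g x) (g' x) with heq | hne
      · simp [heq]
      · exact (hΦlt j hj x hx _ (hgA hx) _ (hg'A hx) hne).le
    have hD0 : 0 ≤ D := dist_nonneg.trans (hD x hx)
    have : D / 2 ≤ l * D := by nlinarith
    linarith

theorem exists_eqOn_rbOperator [CompleteSpace E] (h : IsInterpolationSystem t N a fc Φ z)
    (hA : IsCompact A)
    (hΦc : ∀ j ∈ Icc 1 N, ContinuousOn (uncurry (Φ j)) (Icc (t 0) (t N) ×ˢ A))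
    (hΦA : ∀ j ∈ Icc 1 N, ∀ x ∈ Icc (t 0) (t N), MapsTo (Φ j x) A A)
    (hΦlt : ∀ j ∈ Icc 1 N, ∀ x ∈ Icc (t 0) (t N), ∀ w ∈ A, ∀ w' ∈ A, w ≠ w' →
      dist (Φ j x w) (Φ j x w') < dist w w')
    (hne : ∃ g : ℝ → E, ContinuousOn g (Icc (t 0) (t N)) ∧ g (t 0) = z 0 ∧ g (t N) = z N ∧
      MapsTo g (Icc (t 0) (t N)) A) :
    ∃ f : ℝ → E, Continuous f ∧ f (t 0) = z 0 ∧ f (t N) = z N ∧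
      EqOn (rbOperator t N a fc Φ f) f (Icc (t 0) (t N)) := by
  set I := Icc (t 0) (t N)
  have h0N : t 0 ≤ t N := h.monotoneOn (by simp) (by simp) (Nat.zero_le N)
  set S := pinnedMaps h0N A (z 0) (z N)
  have : CompleteSpace S := (isClosed_pinnedMaps h0N hA.isClosed).completeSpace_coe
  have hext := fun g : S => IccExtend_of_mem_pinnedMaps h0N g.2
  let T : S → S := fun g => ⟨_, mk_mem_pinnedMaps h0N
    (h.continuousOn_rbOperator hΦc g.1.continuous.Icc_extend'.continuousOn (hext g).1
      (hext g).2.1 (hext g).2.2)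
    (h.rbOperator_left (hext g).1 (hext g).2.1) (h.rbOperator_right (hext g).1 (hext g).2.1)
    (h.mapsTo_rbOperator hΦA (hext g).2.2)⟩
  have hT : ∀ ε > 0, ∀ᶠ l in 𝓝[<] 1, ∀ g g' : S, ε ≤ dist g g' →
      dist (T g) (T g') ≤ l * dist g g' := by
    intro ε hε
    have hΦε := fun j hj => isCompact_Icc.eventually_forall_dist_le_mul hA (hΦc j hj)
      (hΦlt j hj) (half_pos hε)
    filter_upwards [(finite_Icc 1 N).eventually_all.2 hΦε, Ioo_mem_nhdsLT one_half_lt_one]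
      with l hl hl2 g g' hgg'
    refine (ContinuousMap.dist_le (by have := hl2.1; positivity)).2 fun y => ?_
    refine h.dist_rbOperator_le hl2.1.le hΦlt hl (hext g).2.2 (hext g').2.2
      (fun x hx => ?_) hgg' y.2
    rw [IccExtend_of_mem _ _ hx, IccExtend_of_mem _ _ hx]
    exact ContinuousMap.dist_apply_le_dist _
  obtain ⟨g₀, hg₀, hg₀0, hg₀N, hg₀A⟩ := hne
  have : Nonempty S := ⟨⟨_, mk_mem_pinnedMaps h0N hg₀ hg₀0 hg₀N hg₀A⟩⟩
  obtain ⟨g, hg⟩ := exists_isFixedPt_of_forall_dist_le_mul hT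
  refine ⟨IccExtend h0N g, g.1.continuous.Icc_extend', (hext g).1, (hext g).2.1, fun y hy => ?_⟩
  rw [IccExtend_of_mem _ _ hy]
  exact congrArg (fun g : S => (g : C(I, E)) ⟨y, hy⟩) hg

end MetricSpace

theorem exists_continuous_interpolant [NormedAddCommGroup E] [NormedSpace ℝ E] [ProperSpace E]
    (h : IsInterpolationSystem t N a fc Φ z) {K : Set E} (hK : IsCompact K) (hz₀ : z 0 ∈ K)
    (hΦc : ∀ j ∈ Icc 1 N, ContinuousOn (uncurry (Φ j)) (Icc (t 0) (t N) ×ˢ univ))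
    (hΦK : ∀ j ∈ Icc 1 N, ∀ x ∈ Icc (t 0) (t N), MapsTo (Φ j x) K K)
    (hΦlt : ∀ j ∈ Icc 1 N, ∀ x ∈ Icc (t 0) (t N), ∀ w w', w ≠ w' →
      dist (Φ j x w) (Φ j x w') < dist w w') :
    ∃ f : ℝ → E, Continuous f ∧
      (∀ j ∈ Icc 1 N, ∀ x ∈ Icc (t 0) (t N), f (a j * x + fc j) = Φ j x (f x)) ∧
      ∀ j ≤ N, f (t j) = z j := by
  have hI : t 0 < t N := h.strictMonoOn (by simp) (by simp) h.pos
  -- `K` may contain no path from `z 0` to `z N`; this thickening contains the segment and is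
  -- still invariant, the `Φ j x` being `1`-Lipschitz.
  obtain ⟨f, hfc, hf0, hfN, hf⟩ :=
    h.exists_eqOn_rbOperator (hK.cthickening (r := dist (z 0) (z N)))
    (fun j hj => (hΦc j hj).mono (prod_mono subset_rfl (subset_univ _)))
    (fun j hj x hx => mapsTo_cthickening hK dist_nonneg
      (lipschitzWith_one_of_dist_lt (hΦlt j hj x hx)) (hΦK j hj x hx))
    (fun j hj x hx w _ w' _ => hΦlt j hj x hx w w')
    ⟨fun y => AffineMap.lineMap (z 0) (z N) ((y - t 0) / (t N - t 0)), by fun_prop, by simp,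
      by simp [sub_ne_zero.2 hI.ne'], fun y hy => lineMap_mem_cthickening hz₀ _
        ⟨div_nonneg (by linarith [hy.1]) (by linarith),
          (div_le_one (by linarith)).2 (by linarith [hy.2])⟩⟩
  exact ⟨f, hfc, fun j hj x hx => h.apply_affine_of_eqOn hf hf0 hfN hj hx,
    fun j hj => h.apply_knot_of_eqOn hf hf0 hfN hj⟩

end IsInterpolationSystem

end ReadBajraktarevicFixedPoint

section MixMap

/-- The map `F_j`, on `ℝ²` with the `ℓ¹` norm. -/
noncomputable def mixMap (b c d e p q s r : ℝ → ℝ) (x : ℝ) (u : WithLp 1 (ℝ × ℝ)) :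
    WithLp 1 (ℝ × ℝ) :=
  toLp 1 (b x * s u.fst + c x * r u.snd + p x, d x * s u.fst + e x * r u.snd + q x)

variable {b c d e p q s r : ℝ → ℝ} {S : Set ℝ}

theorem continuousOn_mixMap (hbq : ∀ g ∈ ([b, c, d, e, p, q] : List (ℝ → ℝ)), ContinuousOn g S)
    (hs : Continuous s) (hr : Continuous r) :
    ContinuousOn (uncurry (mixMap b c d e p q s r)) (S ×ˢ univ) := by
  have hS : MapsTo (Prod.fst : ℝ × WithLp 1 (ℝ × ℝ) → ℝ) (S ×ˢ univ) S := fun q hq => hq.1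
  have hcoef : ∀ g ∈ ([b, c, d, e, p, q] : List (ℝ → ℝ)),
      ContinuousOn (fun q : ℝ × WithLp 1 (ℝ × ℝ) => g q.1) (S ×ˢ univ) := fun g hg =>
    (hbq g hg).comp continuousOn_fst hS
  have h₁ : ContinuousOn (fun q : ℝ × WithLp 1 (ℝ × ℝ) => s q.2.fst) (S ×ˢ univ) := by fun_prop
  have h₂ : ContinuousOn (fun q : ℝ × WithLp 1 (ℝ × ℝ) => r q.2.snd) (S ×ˢ univ) := by fun_prop
  refine (prod_continuous_toLp 1 ℝ ℝ).comp_continuousOn (ContinuousOn.prodMk ?_ ?_)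
  · exact (((hcoef b (by simp)).mul h₁).add ((hcoef c (by simp)).mul h₂)).add (hcoef p (by simp))
  · exact (((hcoef d (by simp)).mul h₁).add ((hcoef e (by simp)).mul h₂)).add (hcoef q (by simp))

theorem continuous_of_abs_sub_lt (hs : ∀ x y, x ≠ y → |s x - s y| < |x - y|) : Continuous s :=
  (lipschitzWith_one_of_dist_lt (by simpa only [Real.dist_eq] using hs)).continuous

theorem dist_toLp_one (u u' : ℝ × ℝ) :
    dist (toLp 1 u) (toLp 1 u') = |u.1 - u'.1| + |u.2 - u'.2| := by
  simp [prod_dist_eq_of_L1, Real.dist_eq]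

theorem abs_mul_add_mul_add_abs_le {β γ δ η u w : ℝ} (h₁ : |β| + |δ| ≤ 1) (h₂ : |γ| + |η| ≤ 1) :
    |β * u + γ * w| + |δ * u + η * w| ≤ |u| + |w| := by
  have := abs_add_le (β * u) (γ * w)
  have := abs_add_le (δ * u) (η * w)
  simp only [abs_mul] at *
  nlinarith [abs_nonneg u, abs_nonneg w]

theorem abs_sub_add_abs_sub_lt (hs : ∀ x y, x ≠ y → |s x - s y| < |x - y|)
    (hr : ∀ x y, x ≠ y → |r x - r y| < |x - y|) {u u' : ℝ × ℝ} (huu' : u ≠ u') :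
    |s u.1 - s u'.1| + |r u.2 - r u'.2| < |u.1 - u'.1| + |u.2 - u'.2| := by
  rcases eq_or_ne u.1 u'.1 with h₁ | h₁
  · have h₂ : u.2 ≠ u'.2 := fun h₂ => huu' (Prod.ext h₁ h₂)
    simpa [h₁] using hr _ _ h₂
  · refine add_lt_add_of_lt_of_le (hs _ _ h₁) ?_
    rcases eq_or_ne u.2 u'.2 with h₂ | h₂
    · simp [h₂]
    · exact (hr _ _ h₂).le

theorem dist_mixMap_lt
    (hbd : ∃ B D : ℝ, B + D ≤ 1 ∧ (∀ x ∈ S, |b x| ≤ B) ∧ ∀ x ∈ S, |d x| ≤ D)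
    (hce : ∃ C E : ℝ, C + E ≤ 1 ∧ (∀ x ∈ S, |c x| ≤ C) ∧ ∀ x ∈ S, |e x| ≤ E)
    (hs : ∀ x y, x ≠ y → |s x - s y| < |x - y|) (hr : ∀ x y, x ≠ y → |r x - r y| < |x - y|)
    {x : ℝ} (hx : x ∈ S) {u u' : WithLp 1 (ℝ × ℝ)} (huu' : u ≠ u') :
    dist (mixMap b c d e p q s r x u) (mixMap b c d e p q s r x u') < dist u u' := by
  obtain ⟨B, D, hBD, hB, hD⟩ := hbd
  obtain ⟨C, E, hCE, hC, hE⟩ := hce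
  rw [mixMap, mixMap, dist_toLp_one, ← toLp_ofLp 1 u, ← toLp_ofLp 1 u', dist_toLp_one]
  calc _ = |b x * (s u.fst - s u'.fst) + c x * (r u.snd - r u'.snd)| +
        |d x * (s u.fst - s u'.fst) + e x * (r u.snd - r u'.snd)| := by ring_nf
    _ ≤ |s u.fst - s u'.fst| + |r u.snd - r u'.snd| :=
      abs_mul_add_mul_add_abs_le (by linarith [hB x hx, hD x hx]) (by linarith [hC x hx, hE x hx])
    _ < _ := abs_sub_add_abs_sub_lt hs hr ((ofLp_injective 1).ne huu')

end MixMap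

theorem RB_has_fixed_point_general
    (N : ℕ) (hN : 0 < N)
    (t v w : ℕ → ℝ)
    (htmono : ∀ j, j < N → t j < t (j + 1))
    (a fc : ℕ → ℝ) (L : ℕ → ℝ → ℝ)
    (hL : ∀ j, 1 ≤ j → j ≤ N → ∀ x : ℝ, L j x = a j * x + fc j)
    (hL0 : ∀ j, 1 ≤ j → j ≤ N → L j (t 0) = t (j - 1))
    (hLN : ∀ j, 1 ≤ j → j ≤ N → L j (t N) = t j)
    (b c d e p q : ℕ → ℝ → ℝ)
    (hLip : ∀ j, 1 ≤ j → j ≤ N → ∀ g ∈ ([b j, c j, d j, e j, p j, q j] : List (ℝ → ℝ)),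
      ∃ Kg : NNReal, LipschitzOnWith Kg g (Set.Icc (t 0) (t N)))
    (hbd : ∀ j, 1 ≤ j → j ≤ N → ∃ B D : ℝ, B + D ≤ 1 ∧
      (∀ x ∈ Set.Icc (t 0) (t N), |b j x| ≤ B) ∧ (∀ x ∈ Set.Icc (t 0) (t N), |d j x| ≤ D))
    (hce : ∀ j, 1 ≤ j → j ≤ N → ∃ C E : ℝ, C + E ≤ 1 ∧
      (∀ x ∈ Set.Icc (t 0) (t N), |c j x| ≤ C) ∧ (∀ x ∈ Set.Icc (t 0) (t N), |e j x| ≤ E))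
    (s r : ℕ → ℝ → ℝ)
    (hs : ∀ j, 1 ≤ j → j ≤ N → ∀ x y : ℝ, x ≠ y → |s j x - s j y| < |x - y|)
    (hr : ∀ j, 1 ≤ j → j ≤ N → ∀ x y : ℝ, x ≠ y → |r j x - r j y| < |x - y|)
    (F : ℕ → ℝ → ℝ × ℝ → ℝ × ℝ)
    (hF : ∀ j x vw, F j x vw = (b j x * s j vw.1 + c j x * r j vw.2 + p j x,
                                d j x * s j vw.1 + e j x * r j vw.2 + q j x))
    (hF0 : ∀ j, 1 ≤ j → j ≤ N → F j (t 0) (v 0, w 0) = (v (j - 1), w (j - 1)))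
    (hFN : ∀ j, 1 ≤ j → j ≤ N → F j (t N) (v N, w N) = (v j, w j))
    (K : Set (ℝ × ℝ)) (hKc : IsCompact K)
    (hKv : ∀ j, j ≤ N → (v j, w j) ∈ K)
    (hKF : ∀ j, 1 ≤ j → j ≤ N → ∀ x ∈ Set.Icc (t 0) (t N), ∀ vw ∈ K, F j x vw ∈ K)
    :
    ∃ f : ℝ → ℝ × ℝ, ContinuousOn f (Set.Icc (t 0) (t N)) ∧
      (∀ j, 1 ≤ j → j ≤ N → ∀ x ∈ Set.Icc (t 0) (t N), f (L j x) = F j x (f x)) ∧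
      (∀ j, j ≤ N → f (t j) = (v j, w j)) := by
  have ht : StrictMonoOn t (Iic N) :=
    strictMonoOn_Iic_of_lt_succ fun m hm => by simpa [Order.succ_eq_add_one] using htmono m hm
  let Φ : ℕ → ℝ → WithLp 1 (ℝ × ℝ) → WithLp 1 (ℝ × ℝ) := fun j =>
    mixMap (b j) (c j) (d j) (e j) (p j) (q j) (s j) (r j)
  have hΦF : ∀ j x u, Φ j x u = toLp 1 (F j x (ofLp u)) := fun j x u => by simp [Φ, mixMap, hF]
  have hsys : IsInterpolationSystem t N a fc Φ fun j => toLp 1 (v j, w j) :=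
    { pos := hN
      strictMonoOn := ht
      affine_left := fun j hj => by rw [← hL j hj.1 hj.2]; exact hL0 j hj.1 hj.2
      affine_right := fun j hj => by rw [← hL j hj.1 hj.2]; exact hLN j hj.1 hj.2
      map_left := fun j hj => by simp [hΦF, hF0 j hj.1 hj.2]
      map_right := fun j hj => by simp [hΦF, hFN j hj.1 hj.2] }
  obtain ⟨f, hfc, hfL, hft⟩ := hsys.exists_continuous_interpolant
    (hKc.image (prod_continuous_toLp 1 ℝ ℝ)) (mem_image_of_mem _ (hKv 0 (Nat.zero_le N)))
    (fun j hj => continuousOn_mixMap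
      (fun g hg => (hLip j hj.1 hj.2 g hg).elim fun _ hg => hg.continuousOn)
      (continuous_of_abs_sub_lt (hs j hj.1 hj.2)) (continuous_of_abs_sub_lt (hr j hj.1 hj.2)))
    (fun j hj x hx => by
      rintro _ ⟨k, hk, rfl⟩
      rw [hΦF]
      exact mem_image_of_mem _ (by simpa using hKF j hj.1 hj.2 x hx k hk))
    (fun j hj x hx u u' => dist_mixMap_lt (hbd j hj.1 hj.2) (hce j hj.1 hj.2) (hs j hj.1 hj.2)
      (hr j hj.1 hj.2) hx)
  refine ⟨fun y => ofLp (f y), ((prod_continuous_ofLp 1 ℝ ℝ).comp hfc).continuousOn,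
    fun j hj1 hjN x hx => ?_, fun j hj => by simp [hft j hj]⟩
  simp only [hL j hj1 hjN, hfL j ⟨hj1, hjN⟩ x hx, hΦF, ofLp_toLp]

/-- The Read–Bajraktarević operator has a fixed point `f ∈ C_d(I)`: a continuous
vector-valued function satisfying `f (L j x) = F j x (f x)` on `I` for every `j`,
which interpolates the generalized data. -/
theorem RB_has_fixed_point
    (N : ℕ) (hN : 0 < N)
    (t v w : ℕ → ℝ)
    (htmono : ∀ j, j < N → t j < t (j + 1))
    (a fc : ℕ → ℝ) (L : ℕ → ℝ → ℝ)
    (hL : ∀ j, 1 ≤ j → j ≤ N → ∀ x : ℝ, L j x = a j * x + fc j)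
    (ha : ∀ j, 1 ≤ j → j ≤ N → a j ≠ 0 ∧ |a j| < 1)
    (hL0 : ∀ j, 1 ≤ j → j ≤ N → L j (t 0) = t (j - 1))
    (hLN : ∀ j, 1 ≤ j → j ≤ N → L j (t N) = t j)
    (b c d e p q : ℕ → ℝ → ℝ)
    (hLip : ∀ j, 1 ≤ j → j ≤ N → ∀ g ∈ ([b j, c j, d j, e j, p j, q j] : List (ℝ → ℝ)),
      ∃ Kg : NNReal, LipschitzOnWith Kg g (Set.Icc (t 0) (t N)))
    (hbd : ∀ j, 1 ≤ j → j ≤ N → ∃ B D : ℝ, B + D ≤ 1 ∧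
      (∀ x ∈ Set.Icc (t 0) (t N), |b j x| ≤ B) ∧ (∀ x ∈ Set.Icc (t 0) (t N), |d j x| ≤ D))
    (hce : ∀ j, 1 ≤ j → j ≤ N → ∃ C E : ℝ, C + E ≤ 1 ∧
      (∀ x ∈ Set.Icc (t 0) (t N), |c j x| ≤ C) ∧ (∀ x ∈ Set.Icc (t 0) (t N), |e j x| ≤ E))
    (s r : ℕ → ℝ → ℝ)
    (hs : ∀ j, 1 ≤ j → j ≤ N → ∀ x y : ℝ, x ≠ y → |s j x - s j y| < |x - y|)
    (hr : ∀ j, 1 ≤ j → j ≤ N → ∀ x y : ℝ, x ≠ y → |r j x - r j y| < |x - y|)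
    (F : ℕ → ℝ → ℝ × ℝ → ℝ × ℝ)
    (hF : ∀ j x vw, F j x vw = (b j x * s j vw.1 + c j x * r j vw.2 + p j x,
                                d j x * s j vw.1 + e j x * r j vw.2 + q j x))
    (hF0 : ∀ j, 1 ≤ j → j ≤ N → F j (t 0) (v 0, w 0) = (v (j - 1), w (j - 1)))
    (hFN : ∀ j, 1 ≤ j → j ≤ N → F j (t N) (v N, w N) = (v j, w j))
    (K : Set (ℝ × ℝ)) (hKc : IsCompact K)
    (hKv : ∀ j, j ≤ N → (v j, w j) ∈ K)
    (hKF : ∀ j, 1 ≤ j → j ≤ N → ∀ x ∈ Set.Icc (t 0) (t N), ∀ vw ∈ K, F j x vw ∈ K)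
    :
    ∃ f : ℝ → ℝ × ℝ, ContinuousOn f (Set.Icc (t 0) (t N)) ∧
      (∀ j, 1 ≤ j → j ≤ N → ∀ x ∈ Set.Icc (t 0) (t N), f (L j x) = F j x (f x)) ∧
      (∀ j, j ≤ N → f (t j) = (v j, w j)) :=
  RB_has_fixed_point_general N hN t v w htmono a fc L hL hL0 hLN b c d e p q hLip hbd hce s r hs hr
    F hF hF0 hFN K hKc hKv hKF
end

section
/- There exists θ > 0 such that, with respect to the metric d_θ((t,v,w),(t',v',w')) = |t − t'| + θ(|v − v'| + |w − w'|) on I × K (a metric equivalent to the Euclidean metric), each map g_j(t,v,w) = (L_j(t), F_j(t,v,w)), j = 1,…,N, is an Edelstein contraction on I × K: d_θ(g_j(x), g_j(y)) < d_θ(x, y) for all distinct x, y ∈ I × K. -/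
private lemma edel_le (s : ℝ → ℝ) (hs : ∀ x y : ℝ, x ≠ y → |s x - s y| < |x - y|) :
    ∀ x y : ℝ, |s x - s y| ≤ |x - y| := by
  intro x y
  rcases eq_or_ne x y with h | h
  · simp [h]
  · exact (hs x y h).le

private lemma edel_sum_lt (s r : ℝ → ℝ)
    (hs : ∀ x y : ℝ, x ≠ y → |s x - s y| < |x - y|)
    (hr : ∀ x y : ℝ, x ≠ y → |r x - r y| < |x - y|)
    (v v' w w' : ℝ) (h : (v, w) ≠ (v', w')) :
    |s v - s v'| + |r w - r w'| < |v - v'| + |w - w'| := by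
  rcases eq_or_ne v v' with hv | hv
  · have hw : w ≠ w' := by
      rintro rfl; exact h (by rw [hv])
    subst hv
    simpa using hr w w' hw
  · have h1 := hs v v' hv
    have h2 := edel_le r hr w w'
    linarith

private lemma abs5 (x1 x2 x3 x4 x5 : ℝ) :
    |x1 + x2 + x3 + x4 + x5| ≤ |x1| + |x2| + |x3| + |x4| + |x5| := by
  calc |x1 + x2 + x3 + x4 + x5| ≤ |x1 + x2 + x3 + x4| + |x5| := abs_add_le _ _
    _ ≤ (|x1 + x2 + x3| + |x4|) + |x5| := by linarith [abs_add_le (x1 + x2 + x3) x4]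
    _ ≤ _ := by linarith [abs_add_le (x1 + x2) x3, abs_add_le x1 x2]

private lemma est_aux (I : Set ℝ) (K : Set (ℝ × ℝ)) (R : ℝ) (hR0 : 0 ≤ R)
    (hR : ∀ x ∈ K, |x.1| ≤ R ∧ |x.2| ≤ R)
    (b c d e p q s r : ℝ → ℝ)
    (B C D E : ℝ) (hB0 : 0 ≤ B) (hC0 : 0 ≤ C) (hD0 : 0 ≤ D) (hE0 : 0 ≤ E)
    (hBD : B + D ≤ 1) (hCE : C + E ≤ 1)
    (hBb : ∀ x ∈ I, |b x| ≤ B) (hCc : ∀ x ∈ I, |c x| ≤ C)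
    (hDd : ∀ x ∈ I, |d x| ≤ D) (hEe : ∀ x ∈ I, |e x| ≤ E)
    (Kb Kc Kd Ke Kp Kq : NNReal)
    (hbL : LipschitzOnWith Kb b I) (hcL : LipschitzOnWith Kc c I)
    (hdL : LipschitzOnWith Kd d I) (heL : LipschitzOnWith Ke e I)
    (hpL : LipschitzOnWith Kp p I) (hqL : LipschitzOnWith Kq q I)
    (hsl : ∀ x y : ℝ, |s x - s y| ≤ |x - y|) (hrl : ∀ x y : ℝ, |r x - r y| ≤ |x - y|) :
    ∃ M : ℝ, 0 ≤ M ∧ ∀ t₁ ∈ I, ∀ t₂ ∈ I, ∀ P ∈ K, ∀ Q ∈ K,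
      |(b t₁ * s P.1 + c t₁ * r P.2 + p t₁) - (b t₂ * s Q.1 + c t₂ * r Q.2 + p t₂)| +
      |(d t₁ * s P.1 + e t₁ * r P.2 + q t₁) - (d t₂ * s Q.1 + e t₂ * r Q.2 + q t₂)| ≤
      |s P.1 - s Q.1| + |r P.2 - r Q.2| + M * |t₁ - t₂| := by
  set Ms : ℝ := |s 0| + R with hMsdef
  set Mr : ℝ := |r 0| + R with hMrdef
  have hMs : 0 ≤ Ms := add_nonneg (abs_nonneg _) hR0
  have hMr : 0 ≤ Mr := add_nonneg (abs_nonneg _) hR0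
  refine ⟨(Kb : ℝ) * Ms + Kc * Mr + Kp + Kd * Ms + Ke * Mr + Kq, ?_, ?_⟩
  · have h1 : 0 ≤ (Kb : ℝ) * Ms := mul_nonneg Kb.coe_nonneg hMs
    have h2 : 0 ≤ (Kc : ℝ) * Mr := mul_nonneg Kc.coe_nonneg hMr
    have h3 : 0 ≤ (Kd : ℝ) * Ms := mul_nonneg Kd.coe_nonneg hMs
    have h4 : 0 ≤ (Ke : ℝ) * Mr := mul_nonneg Ke.coe_nonneg hMr
    have h5 := Kp.coe_nonneg
    have h6 := Kq.coe_nonneg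
    linarith
  intro t₁ ht₁ t₂ ht₂ P hP Q hQ
  have hsQ : |s Q.1| ≤ Ms := by
    have h3 : |s Q.1| ≤ |s Q.1 - s 0| + |s 0| := by
      calc |s Q.1| = |(s Q.1 - s 0) + s 0| := by congr 1; ring
        _ ≤ _ := abs_add_le _ _
    have h4 := hsl Q.1 0
    rw [sub_zero] at h4
    have h5 := (hR Q hQ).1
    rw [hMsdef]; linarith
  have hrQ : |r Q.2| ≤ Mr := by
    have h3 : |r Q.2| ≤ |r Q.2 - r 0| + |r 0| := by
      calc |r Q.2| = |(r Q.2 - r 0) + r 0| := by congr 1; ring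
        _ ≤ _ := abs_add_le _ _
    have h4 := hrl Q.2 0
    rw [sub_zero] at h4
    have h5 := (hR Q hQ).2
    rw [hMrdef]; linarith
  have hdb : |b t₁ - b t₂| ≤ (Kb : ℝ) * |t₁ - t₂| := by
    have := hbL.dist_le_mul t₁ ht₁ t₂ ht₂; simpa [Real.dist_eq] using this
  have hdc : |c t₁ - c t₂| ≤ (Kc : ℝ) * |t₁ - t₂| := by
    have := hcL.dist_le_mul t₁ ht₁ t₂ ht₂; simpa [Real.dist_eq] using this
  have hdd : |d t₁ - d t₂| ≤ (Kd : ℝ) * |t₁ - t₂| := by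
    have := hdL.dist_le_mul t₁ ht₁ t₂ ht₂; simpa [Real.dist_eq] using this
  have hde : |e t₁ - e t₂| ≤ (Ke : ℝ) * |t₁ - t₂| := by
    have := heL.dist_le_mul t₁ ht₁ t₂ ht₂; simpa [Real.dist_eq] using this
  have hdp : |p t₁ - p t₂| ≤ (Kp : ℝ) * |t₁ - t₂| := by
    have := hpL.dist_le_mul t₁ ht₁ t₂ ht₂; simpa [Real.dist_eq] using this
  have hdq : |q t₁ - q t₂| ≤ (Kq : ℝ) * |t₁ - t₂| := by
    have := hqL.dist_le_mul t₁ ht₁ t₂ ht₂; simpa [Real.dist_eq] using this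
  have hKbt : (0:ℝ) ≤ (Kb : ℝ) * |t₁ - t₂| := mul_nonneg Kb.coe_nonneg (abs_nonneg _)
  have hKct : (0:ℝ) ≤ (Kc : ℝ) * |t₁ - t₂| := mul_nonneg Kc.coe_nonneg (abs_nonneg _)
  have hKdt : (0:ℝ) ≤ (Kd : ℝ) * |t₁ - t₂| := mul_nonneg Kd.coe_nonneg (abs_nonneg _)
  have hKet : (0:ℝ) ≤ (Ke : ℝ) * |t₁ - t₂| := mul_nonneg Ke.coe_nonneg (abs_nonneg _)
  have hd1 : |(b t₁ * s P.1 + c t₁ * r P.2 + p t₁) - (b t₂ * s Q.1 + c t₂ * r Q.2 + p t₂)|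
      ≤ B * |s P.1 - s Q.1| + ((Kb : ℝ) * |t₁ - t₂|) * Ms + C * |r P.2 - r Q.2|
        + ((Kc : ℝ) * |t₁ - t₂|) * Mr + (Kp : ℝ) * |t₁ - t₂| := by
    have i1 : |b t₁ * (s P.1 - s Q.1)| ≤ B * |s P.1 - s Q.1| := by
      rw [abs_mul]; exact mul_le_mul_of_nonneg_right (hBb t₁ ht₁) (abs_nonneg _)
    have i2 : |(b t₁ - b t₂) * s Q.1| ≤ ((Kb : ℝ) * |t₁ - t₂|) * Ms := by
      rw [abs_mul]; exact mul_le_mul hdb hsQ (abs_nonneg _) hKbt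
    have i3 : |c t₁ * (r P.2 - r Q.2)| ≤ C * |r P.2 - r Q.2| := by
      rw [abs_mul]; exact mul_le_mul_of_nonneg_right (hCc t₁ ht₁) (abs_nonneg _)
    have i4 : |(c t₁ - c t₂) * r Q.2| ≤ ((Kc : ℝ) * |t₁ - t₂|) * Mr := by
      rw [abs_mul]; exact mul_le_mul hdc hrQ (abs_nonneg _) hKct
    calc |(b t₁ * s P.1 + c t₁ * r P.2 + p t₁) - (b t₂ * s Q.1 + c t₂ * r Q.2 + p t₂)|
        = |b t₁ * (s P.1 - s Q.1) + (b t₁ - b t₂) * s Q.1 + c t₁ * (r P.2 - r Q.2)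
            + (c t₁ - c t₂) * r Q.2 + (p t₁ - p t₂)| := by congr 1; ring
      _ ≤ _ := abs5 _ _ _ _ _
      _ ≤ _ := by linarith
  have hd2 : |(d t₁ * s P.1 + e t₁ * r P.2 + q t₁) - (d t₂ * s Q.1 + e t₂ * r Q.2 + q t₂)|
      ≤ D * |s P.1 - s Q.1| + ((Kd : ℝ) * |t₁ - t₂|) * Ms + E * |r P.2 - r Q.2|
        + ((Ke : ℝ) * |t₁ - t₂|) * Mr + (Kq : ℝ) * |t₁ - t₂| := by
    have i1 : |d t₁ * (s P.1 - s Q.1)| ≤ D * |s P.1 - s Q.1| := by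
      rw [abs_mul]; exact mul_le_mul_of_nonneg_right (hDd t₁ ht₁) (abs_nonneg _)
    have i2 : |(d t₁ - d t₂) * s Q.1| ≤ ((Kd : ℝ) * |t₁ - t₂|) * Ms := by
      rw [abs_mul]; exact mul_le_mul hdd hsQ (abs_nonneg _) hKdt
    have i3 : |e t₁ * (r P.2 - r Q.2)| ≤ E * |r P.2 - r Q.2| := by
      rw [abs_mul]; exact mul_le_mul_of_nonneg_right (hEe t₁ ht₁) (abs_nonneg _)
    have i4 : |(e t₁ - e t₂) * r Q.2| ≤ ((Ke : ℝ) * |t₁ - t₂|) * Mr := by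
      rw [abs_mul]; exact mul_le_mul hde hrQ (abs_nonneg _) hKet
    calc |(d t₁ * s P.1 + e t₁ * r P.2 + q t₁) - (d t₂ * s Q.1 + e t₂ * r Q.2 + q t₂)|
        = |d t₁ * (s P.1 - s Q.1) + (d t₁ - d t₂) * s Q.1 + e t₁ * (r P.2 - r Q.2)
            + (e t₁ - e t₂) * r Q.2 + (q t₁ - q t₂)| := by congr 1; ring
      _ ≤ _ := abs5 _ _ _ _ _
      _ ≤ _ := by linarith
  have hs1 : (B + D) * |s P.1 - s Q.1| ≤ |s P.1 - s Q.1| := by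
    have := mul_le_mul_of_nonneg_right hBD (abs_nonneg (s P.1 - s Q.1))
    linarith
  have hs2 : (C + E) * |r P.2 - r Q.2| ≤ |r P.2 - r Q.2| := by
    have := mul_le_mul_of_nonneg_right hCE (abs_nonneg (r P.2 - r Q.2))
    linarith
  nlinarith [hd1, hd2, hs1, hs2]
/-- There is `θ > 0` such that, for the metric
`d_θ((t,v,w),(t',v',w')) = |t - t'| + θ(|v - v'| + |w - w'|)` on `I × K`
(equivalent to the Euclidean metric), each map `g j (t,v,w) = (L j t, F j t (v,w))`
is an Edelstein contraction on `I × K`. -/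
theorem g_maps_Edelstein
    (N : ℕ) (hN : 0 < N)
    (t v w : ℕ → ℝ)
    (htmono : ∀ j, j < N → t j < t (j + 1))
    (a fc : ℕ → ℝ) (L : ℕ → ℝ → ℝ)
    (hL : ∀ j, 1 ≤ j → j ≤ N → ∀ x : ℝ, L j x = a j * x + fc j)
    (ha : ∀ j, 1 ≤ j → j ≤ N → a j ≠ 0 ∧ |a j| < 1)
    (hL0 : ∀ j, 1 ≤ j → j ≤ N → L j (t 0) = t (j - 1))
    (hLN : ∀ j, 1 ≤ j → j ≤ N → L j (t N) = t j)
    (b c d e p q : ℕ → ℝ → ℝ)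
    (hLip : ∀ j, 1 ≤ j → j ≤ N → ∀ g ∈ ([b j, c j, d j, e j, p j, q j] : List (ℝ → ℝ)),
      ∃ Kg : NNReal, LipschitzOnWith Kg g (Set.Icc (t 0) (t N)))
    (hbd : ∀ j, 1 ≤ j → j ≤ N → ∃ B D : ℝ, B + D ≤ 1 ∧
      (∀ x ∈ Set.Icc (t 0) (t N), |b j x| ≤ B) ∧ (∀ x ∈ Set.Icc (t 0) (t N), |d j x| ≤ D))
    (hce : ∀ j, 1 ≤ j → j ≤ N → ∃ C E : ℝ, C + E ≤ 1 ∧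
      (∀ x ∈ Set.Icc (t 0) (t N), |c j x| ≤ C) ∧ (∀ x ∈ Set.Icc (t 0) (t N), |e j x| ≤ E))
    (s r : ℕ → ℝ → ℝ)
    (hs : ∀ j, 1 ≤ j → j ≤ N → ∀ x y : ℝ, x ≠ y → |s j x - s j y| < |x - y|)
    (hr : ∀ j, 1 ≤ j → j ≤ N → ∀ x y : ℝ, x ≠ y → |r j x - r j y| < |x - y|)
    (F : ℕ → ℝ → ℝ × ℝ → ℝ × ℝ)
    (hF : ∀ j x vw, F j x vw = (b j x * s j vw.1 + c j x * r j vw.2 + p j x,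
                                d j x * s j vw.1 + e j x * r j vw.2 + q j x))
    (hF0 : ∀ j, 1 ≤ j → j ≤ N → F j (t 0) (v 0, w 0) = (v (j - 1), w (j - 1)))
    (hFN : ∀ j, 1 ≤ j → j ≤ N → F j (t N) (v N, w N) = (v j, w j))
    (K : Set (ℝ × ℝ)) (hKc : IsCompact K)
    (hKv : ∀ j, j ≤ N → (v j, w j) ∈ K)
    (hKF : ∀ j, 1 ≤ j → j ≤ N → ∀ x ∈ Set.Icc (t 0) (t N), ∀ vw ∈ K, F j x vw ∈ K)
    :
    ∃ θ : ℝ, 0 < θ ∧ ∀ j, 1 ≤ j → j ≤ N → ∀ P Q : ℝ × ℝ × ℝ,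
      P ∈ (Set.Icc (t 0) (t N)) ×ˢ K → Q ∈ (Set.Icc (t 0) (t N)) ×ˢ K → P ≠ Q →
      |L j P.1 - L j Q.1| +
          θ * (|(F j P.1 P.2).1 - (F j Q.1 Q.2).1| + |(F j P.1 P.2).2 - (F j Q.1 Q.2).2|) <
        |P.1 - Q.1| + θ * (|P.2.1 - Q.2.1| + |P.2.2 - Q.2.2|) := by
  classical
  set I : Set ℝ := Set.Icc (t 0) (t N) with hIdef
  -- t 0 ∈ I
  have h0N : ∀ k, k ≤ N → t 0 ≤ t k := by
    intro k
    induction k with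
    | zero => exact fun _ => le_rfl
    | succ k ih =>
      intro hk
      have h1 : k ≤ N := Nat.le_of_succ_le hk
      have h2 : k < N := Nat.lt_of_succ_le hk
      exact le_trans (ih h1) (htmono k h2).le
  have ht0I : t 0 ∈ I := Set.mem_Icc.mpr ⟨le_rfl, h0N N le_rfl⟩
  -- bound on K
  obtain ⟨R0, hR0⟩ := hKc.isBounded.exists_norm_le
  set R : ℝ := max R0 0 with hRdef
  have hRnn : 0 ≤ R := le_max_right _ _
  have hRK : ∀ x ∈ K, |x.1| ≤ R ∧ |x.2| ≤ R := by
    intro x hx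
    have h1 : ‖x.1‖ ≤ ‖x‖ := norm_fst_le x
    have h2 : ‖x.2‖ ≤ ‖x‖ := norm_snd_le x
    have h3 := hR0 x hx
    rw [Real.norm_eq_abs] at h1 h2
    constructor <;> [exact le_trans h1 (le_trans h3 (le_max_left _ _));
      exact le_trans h2 (le_trans h3 (le_max_left _ _))]
  -- per-j Lipschitz constants
  have hbLip : ∀ j, 1 ≤ j → j ≤ N → ∃ Kg : NNReal, LipschitzOnWith Kg (b j) I :=
    fun j h1 h2 => hLip j h1 h2 (b j) (by simp)
  have hcLip : ∀ j, 1 ≤ j → j ≤ N → ∃ Kg : NNReal, LipschitzOnWith Kg (c j) I :=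
    fun j h1 h2 => hLip j h1 h2 (c j) (by simp)
  have hdLip : ∀ j, 1 ≤ j → j ≤ N → ∃ Kg : NNReal, LipschitzOnWith Kg (d j) I :=
    fun j h1 h2 => hLip j h1 h2 (d j) (by simp)
  have heLip : ∀ j, 1 ≤ j → j ≤ N → ∃ Kg : NNReal, LipschitzOnWith Kg (e j) I :=
    fun j h1 h2 => hLip j h1 h2 (e j) (by simp)
  have hpLip : ∀ j, 1 ≤ j → j ≤ N → ∃ Kg : NNReal, LipschitzOnWith Kg (p j) I :=
    fun j h1 h2 => hLip j h1 h2 (p j) (by simp)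
  have hqLip : ∀ j, 1 ≤ j → j ≤ N → ∃ Kg : NNReal, LipschitzOnWith Kg (q j) I :=
    fun j h1 h2 => hLip j h1 h2 (q j) (by simp)
  -- per-j estimate
  have hMex : ∀ j, 1 ≤ j → j ≤ N → ∃ M : ℝ, 0 ≤ M ∧ ∀ t₁ ∈ I, ∀ t₂ ∈ I, ∀ P ∈ K, ∀ Q ∈ K,
      |(b j t₁ * s j P.1 + c j t₁ * r j P.2 + p j t₁)
        - (b j t₂ * s j Q.1 + c j t₂ * r j Q.2 + p j t₂)| +
      |(d j t₁ * s j P.1 + e j t₁ * r j P.2 + q j t₁)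
        - (d j t₂ * s j Q.1 + e j t₂ * r j Q.2 + q j t₂)| ≤
      |s j P.1 - s j Q.1| + |r j P.2 - r j Q.2| + M * |t₁ - t₂| := by
    intro j h1 h2
    obtain ⟨B, D, hBD, hBb, hDd⟩ := hbd j h1 h2
    obtain ⟨C, E, hCE, hCc, hEe⟩ := hce j h1 h2
    obtain ⟨Kb, hbL⟩ := hbLip j h1 h2
    obtain ⟨Kc, hcL⟩ := hcLip j h1 h2
    obtain ⟨Kd, hdL⟩ := hdLip j h1 h2
    obtain ⟨Ke, heL⟩ := heLip j h1 h2
    obtain ⟨Kp, hpL⟩ := hpLip j h1 h2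
    obtain ⟨Kq, hqL⟩ := hqLip j h1 h2
    exact est_aux I K R hRnn hRK (b j) (c j) (d j) (e j) (p j) (q j) (s j) (r j)
      B C D E
      (le_trans (abs_nonneg _) (hBb (t 0) ht0I))
      (le_trans (abs_nonneg _) (hCc (t 0) ht0I))
      (le_trans (abs_nonneg _) (hDd (t 0) ht0I))
      (le_trans (abs_nonneg _) (hEe (t 0) ht0I))
      hBD hCE hBb hCc hDd hEe
      Kb Kc Kd Ke Kp Kq hbL hcL hdL heL hpL hqL
      (edel_le (s j) (hs j h1 h2)) (edel_le (r j) (hr j h1 h2))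
  choose! Mf hMf0 hMfb using hMex
  set M' : ℕ → ℝ := fun j => if 1 ≤ j ∧ j ≤ N then Mf j else 0 with hM'def
  have hIcc : (Finset.Icc 1 N).Nonempty := ⟨1, by rw [Finset.mem_Icc]; omega⟩
  set α : ℝ := (Finset.Icc 1 N).sup' hIcc (fun j => |a j|) with hαdef
  set Mmax : ℝ := (Finset.Icc 1 N).sup' hIcc M' with hMmaxdef
  have hα1 : α < 1 := by
    rw [hαdef, Finset.sup'_lt_iff]
    intro j hj
    rw [Finset.mem_Icc] at hj
    exact (ha j hj.1 hj.2).2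
  have hα0 : 0 ≤ α := by
    rw [hαdef]
    exact le_trans (abs_nonneg (a 1))
      (Finset.le_sup' (fun j => |a j|) (Finset.mem_Icc.mpr ⟨le_rfl, hN⟩))
  have hM'0 : ∀ j, 0 ≤ M' j := by
    intro j
    rw [hM'def]
    by_cases h : 1 ≤ j ∧ j ≤ N
    · simp only [if_pos h]; exact hMf0 j h.1 h.2
    · simp [if_neg h]
  have hMmax0 : 0 ≤ Mmax := by
    rw [hMmaxdef]
    exact le_trans (hM'0 1) (Finset.le_sup' M' (Finset.mem_Icc.mpr ⟨le_rfl, hN⟩))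
  refine ⟨(1 - α) / (Mmax + 1), div_pos (by linarith) (by linarith), ?_⟩
  set θ : ℝ := (1 - α) / (Mmax + 1) with hθdef
  have hθ : 0 < θ := div_pos (by linarith) (by linarith)
  intro j hj1 hjN P Q hP hQ hPQ
  have hjM : M' j = Mf j := by rw [hM'def]; simp [hj1, hjN]
  have hkey : α + θ * Mf j < 1 := by
    have h1 : M' j ≤ Mmax := by
      rw [hMmaxdef]
      exact Finset.le_sup' M' (Finset.mem_Icc.mpr ⟨hj1, hjN⟩)
    have h2 : θ * (Mmax + 1) = 1 - α := by
      rw [hθdef]; field_simp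
    nlinarith [hjM ▸ h1]
  rw [Set.mem_prod] at hP hQ
  have hLdiff : |L j P.1 - L j Q.1| = |a j| * |P.1 - Q.1| := by
    rw [hL j hj1 hjN, hL j hj1 hjN,
      show a j * P.1 + fc j - (a j * Q.1 + fc j) = a j * (P.1 - Q.1) by ring, abs_mul]
  have hFest := hMfb j hj1 hjN P.1 hP.1 Q.1 hQ.1 P.2 hP.2 Q.2 hQ.2
  have hFeq1 : (F j P.1 P.2).1 - (F j Q.1 Q.2).1 =
      (b j P.1 * s j P.2.1 + c j P.1 * r j P.2.2 + p j P.1)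
        - (b j Q.1 * s j Q.2.1 + c j Q.1 * r j Q.2.2 + p j Q.1) := by
    rw [hF, hF]
  have hFeq2 : (F j P.1 P.2).2 - (F j Q.1 Q.2).2 =
      (d j P.1 * s j P.2.1 + e j P.1 * r j P.2.2 + q j P.1)
        - (d j Q.1 * s j Q.2.1 + e j Q.1 * r j Q.2.2 + q j Q.1) := by
    rw [hF, hF]
  rw [hLdiff, hFeq1, hFeq2]
  have hsle := edel_le (s j) (hs j hj1 hjN) P.2.1 Q.2.1
  have hrle := edel_le (r j) (hr j hj1 hjN) P.2.2 Q.2.2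
  have hθA : θ * (|(b j P.1 * s j P.2.1 + c j P.1 * r j P.2.2 + p j P.1)
        - (b j Q.1 * s j Q.2.1 + c j Q.1 * r j Q.2.2 + p j Q.1)| +
      |(d j P.1 * s j P.2.1 + e j P.1 * r j P.2.2 + q j P.1)
        - (d j Q.1 * s j Q.2.1 + e j Q.1 * r j Q.2.2 + q j Q.1)|)
      ≤ θ * |s j P.2.1 - s j Q.2.1| + θ * |r j P.2.2 - r j Q.2.2|
        + θ * Mf j * |P.1 - Q.1| := by
    have := mul_le_mul_of_nonneg_left hFest hθ.le
    nlinarith [this]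
  rcases eq_or_ne P.1 Q.1 with hteq | htne
  · have hvwne : P.2 ≠ Q.2 := by
      intro h2; exact hPQ (Prod.ext hteq h2)
    have hstrict : |s j P.2.1 - s j Q.2.1| + |r j P.2.2 - r j Q.2.2| <
        |P.2.1 - Q.2.1| + |P.2.2 - Q.2.2| := by
      apply edel_sum_lt (s j) (r j) (hs j hj1 hjN) (hr j hj1 hjN)
      intro h
      apply hvwne
      exact Prod.ext (congrArg Prod.fst h) (congrArg Prod.snd h)
    have hzero : |P.1 - Q.1| = 0 := by rw [hteq]; simp
    have hsm := mul_lt_mul_of_pos_left hstrict hθ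
    have hz1 : |a j| * |P.1 - Q.1| = 0 := by rw [hzero]; ring
    have hz2 : θ * Mf j * |P.1 - Q.1| = 0 := by rw [hzero]; ring
    linarith [hθA, hsm, hz1, hz2]
  · have habs : 0 < |P.1 - Q.1| := abs_pos.mpr (sub_ne_zero.mpr htne)
    have h1 : (α + θ * Mf j) * |P.1 - Q.1| < 1 * |P.1 - Q.1| :=
      mul_lt_mul_of_pos_right hkey habs
    have h2 : |a j| * |P.1 - Q.1| ≤ α * |P.1 - Q.1| := by
      have hαj : |a j| ≤ α := by
        rw [hαdef]
        exact Finset.le_sup' (fun j => |a j|) (Finset.mem_Icc.mpr ⟨hj1, hjN⟩)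
      exact mul_le_mul_of_nonneg_right hαj (abs_nonneg _)
    have h3 : θ * |s j P.2.1 - s j Q.2.1| ≤ θ * |P.2.1 - Q.2.1| :=
      mul_le_mul_of_nonneg_left hsle hθ.le
    have h4 : θ * |r j P.2.2 - r j Q.2.2| ≤ θ * |P.2.2 - Q.2.2| :=
      mul_le_mul_of_nonneg_left hrle hθ.le
    linarith [h1, h2, h3, h4, hθA]
end

section
/- Let (X, μ) be a nonempty compact metric space and f_1,…,f_N : X → X a finite family of Edelstein contractions. Then the iterated function system {X; f_1,…,f_N} possesses an attractor: there is a unique nonempty compact set A ⊆ X such that A = ⋃_{j=1}^N f_j(A). -/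
open Metric Set TopologicalSpace

/-- Edelstein fixed point theorem: a strictly distance-decreasing map on a nonempty
compact metric space has a unique fixed point. -/
theorem edelstein_existsUnique_fixed {Y : Type*} [MetricSpace Y] [CompactSpace Y] [Nonempty Y]
    (g : Y → Y) (hg : ∀ x y : Y, x ≠ y → dist (g x) (g y) < dist x y) :
    ∃! y : Y, g y = y := by
  have hlip : LipschitzWith 1 g := by
    intro x y
    rcases eq_or_ne x y with rfl | hxy
    · simp
    · have := hg x y hxy
      simp only [edist_dist, ENNReal.coe_one, one_mul]
      exact ENNReal.ofReal_le_ofReal (by linarith)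
  have hcont : Continuous fun y : Y => dist y (g y) :=
    continuous_id.dist (hlip.continuous)
  obtain ⟨y₀, -, hy₀⟩ := isCompact_univ.exists_isMinOn univ_nonempty hcont.continuousOn
  have hfix : g y₀ = y₀ := by
    by_contra h
    have h1 : dist (g y₀) (g (g y₀)) < dist y₀ (g y₀) := hg _ _ (Ne.symm h)
    have h2 : dist y₀ (g y₀) ≤ dist (g y₀) (g (g y₀)) := hy₀ (mem_univ (g y₀))
    linarith
  refine ⟨y₀, hfix, fun z hz => ?_⟩
  by_contra h
  have := hg z y₀ h
  rw [hz, hfix] at this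
  exact lt_irrefl _ this

/-- Every iterated function system of finitely many Edelstein contractions on a
nonempty compact metric space possesses a unique attractor: a nonempty compact set
`A` with `A = ⋃ j, f j '' A`. -/
theorem Edelstein_IFS_attractor {X : Type*} [MetricSpace X] [CompactSpace X] [Nonempty X]
    (N : ℕ) (hN : 0 < N) (f : Fin N → X → X)
    (hf : ∀ j, ∀ x y : X, x ≠ y → dist (f j x) (f j y) < dist x y) :
    ∃! A : Set X, A.Nonempty ∧ IsCompact A ∧ A = ⋃ j, f j '' A := by
  haveI : Nonempty (Fin N) := Fin.pos_iff_nonempty.mp hN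
  -- f j is continuous
  have hcont : ∀ j, Continuous (f j) := by
    intro j
    refine LipschitzWith.continuous (K := 1) ?_
    intro x y
    rcases eq_or_ne x y with rfl | hxy
    · simp
    · have := hf j x y hxy
      simp only [edist_dist, ENNReal.coe_one, one_mul]
      exact ENNReal.ofReal_le_ofReal (by linarith)
  -- the Hutchinson operator
  set G : NonemptyCompacts X → NonemptyCompacts X := fun K =>
    ⟨⟨⋃ j, f j '' K, isCompact_iUnion fun j => K.isCompact.image (hcont j)⟩,
      (K.nonempty.image (f (Classical.arbitrary _))).mono
        (subset_iUnion (fun j => f j '' K) (Classical.arbitrary _))⟩ with hG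
  have hGcoe : ∀ K : NonemptyCompacts X, (G K : Set X) = ⋃ j, f j '' K := fun K => rfl
  -- auxiliary: Hausdorff edist between nonempty compacts is finite
  have hfin : ∀ K L : NonemptyCompacts X, EMetric.hausdorffEdist (K : Set X) (L : Set X) ≠ ⊤ :=
    fun K L => hausdorffEdist_ne_top_of_nonempty_of_bounded K.nonempty L.nonempty
      K.isCompact.isBounded L.isCompact.isBounded
  -- G is an Edelstein contraction for the Hausdorff metric
  have hGcontr : ∀ K L : NonemptyCompacts X, K ≠ L → dist (G K) (G L) < dist K L := by
    intro K L hKL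
    have hr : (0 : ℝ) < dist K L := by
      rcases (dist_pos).mpr hKL with h
      exact h
    set r := dist K L with hrdef
    have hdist_eq : ∀ P Q : NonemptyCompacts X, dist P Q = hausdorffDist (P : Set X) Q :=
      fun P Q => NonemptyCompacts.dist_eq
    -- one-sided estimate
    have key : ∀ P Q : NonemptyCompacts X,
        hausdorffDist (P : Set X) (Q : Set X) ≤ r →
        ∀ x ∈ (G P : Set X), infDist x (G Q : Set X) < r := by
      intro P Q hPQ x hx
      rw [hGcoe] at hx
      obtain ⟨j, a, ha, rfl⟩ := by
        simpa only [mem_iUnion, mem_image] using hx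
      obtain ⟨b, hb, hab⟩ := Q.isCompact.exists_infDist_eq_dist Q.nonempty a
      have hmemb : f j b ∈ (G Q : Set X) := by
        rw [hGcoe]
        exact mem_iUnion.2 ⟨j, mem_image_of_mem _ hb⟩
      have hle : infDist (f j a) (G Q : Set X) ≤ dist (f j a) (f j b) :=
        infDist_le_dist_of_mem hmemb
      rcases eq_or_ne a b with rfl | hab'
      · calc infDist (f j a) (G Q : Set X) ≤ dist (f j a) (f j a) := hle
          _ = 0 := by simp
          _ < r := hr
      · have h1 : dist (f j a) (f j b) < dist a b := hf j a b hab'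
        have h2 : dist a b ≤ r := by
          rw [← hab]
          exact (infDist_le_hausdorffDist_of_mem ha (hfin P Q)).trans hPQ
        linarith [hle]
    -- now bound the Hausdorff distance of the images strictly
    have h1 : ∀ x ∈ (G K : Set X), infDist x (G L : Set X) < r := by
      refine key K L (le_of_eq ?_)
      rw [hrdef, hdist_eq]
    have h2 : ∀ x ∈ (G L : Set X), infDist x (G K : Set X) < r := by
      refine key L K (le_of_eq ?_)
      rw [hrdef, hdist_eq, hausdorffDist_comm]
    -- attain the suprema on compact sets
    obtain ⟨x₁, hx₁mem, hx₁⟩ := (G K).isCompact.exists_isMaxOn (G K).nonempty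
      (continuous_infDist_pt (G L : Set X)).continuousOn
    obtain ⟨x₂, hx₂mem, hx₂⟩ := (G L).isCompact.exists_isMaxOn (G L).nonempty
      (continuous_infDist_pt (G K : Set X)).continuousOn
    set m := max (infDist x₁ (G L : Set X)) (infDist x₂ (G K : Set X)) with hm
    have hmlt : m < r := max_lt (h1 _ hx₁mem) (h2 _ hx₂mem)
    have hmnonneg : 0 ≤ m := le_trans infDist_nonneg (le_max_left _ _)
    have hle : hausdorffDist (G K : Set X) (G L : Set X) ≤ m := by
      refine hausdorffDist_le_of_infDist hmnonneg (fun x hx => ?_) (fun x hx => ?_)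
      · exact le_trans (hx₁ hx) (le_max_left _ _)
      · exact le_trans (hx₂ hx) (le_max_right _ _)
    calc dist (G K) (G L) = hausdorffDist (G K : Set X) (G L : Set X) := hdist_eq _ _
      _ ≤ m := hle
      _ < r := hmlt
  -- apply the Edelstein fixed point theorem in the space of nonempty compacts
  obtain ⟨A₀, hA₀fix, hA₀uniq⟩ := edelstein_existsUnique_fixed G (fun K L hKL => hGcontr K L hKL)
  refine ⟨(A₀ : Set X), ⟨A₀.nonempty, A₀.isCompact, ?_⟩, ?_⟩
  · conv_lhs => rw [← hA₀fix]
    exact hGcoe A₀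
  · rintro B ⟨hBne, hBcomp, hBeq⟩
    set B' : NonemptyCompacts X := ⟨⟨B, hBcomp⟩, hBne⟩ with hB'
    have : G B' = B' := by
      apply NonemptyCompacts.ext
      rw [hGcoe]
      exact hBeq.symm
    have := hA₀uniq B' this
    rw [← this]
    rfl
end

section
/- The Read–Bajraktarević operator R is an Edelstein contraction on C_e(I) with respect to the metric d_C: for all h, g ∈ C_e(I) with h ≠ g, one has d_C(Rh, Rg) < d_C(h, g). -/
/-!
Every point `y` of `I` lies in some `I_j` and, by the intermediate value theorem, equals
`L_j x` for some `x ∈ I`; there `(Rh - Rg)(y) = F_j(x, h x) - F_j(x, g x)`. The column-sum bounds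
on `(b_j, d_j)` and `(c_j, e_j)` make the linear part of `F_j` non-expanding for the `ℓ¹` norm on
`ℝ²`, and the Edelstein maps `s_j, r_j` make it strictly contracting where `h x ≠ g x`. Hence the
pointwise distance of `Rh, Rg` at each `y` is strictly below that of `h, g` at some point, and
since a continuous function attains its supremum on the compact interval `I`, the strict
inequality survives passing to suprema.
-/

open Set

/-- The `ℓ¹` distance on `ℝ × ℝ`; `d_C` is its supremum over `I`. -/
def l1Dist (P Q : ℝ × ℝ) : ℝ := |P.1 - Q.1| + |P.2 - Q.2|

lemma l1Dist_self (P : ℝ × ℝ) : l1Dist P P = 0 := by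
  simp [l1Dist]

lemma l1Dist_pos {P Q : ℝ × ℝ} (hPQ : P ≠ Q) : 0 < l1Dist P Q := by
  obtain h₁ | h₂ := not_and_or.1 (mt Prod.ext_iff.2 hPQ)
  · exact add_pos_of_pos_of_nonneg (abs_pos.2 (sub_ne_zero.2 h₁)) (abs_nonneg _)
  · exact add_pos_of_nonneg_of_pos (abs_nonneg _) (abs_pos.2 (sub_ne_zero.2 h₂))

lemma ContinuousOn.l1Dist {α : Type*} [TopologicalSpace α] {f g : α → ℝ × ℝ} {K : Set α}
    (hf : ContinuousOn f K) (hg : ContinuousOn g K) :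
    ContinuousOn (fun x => _root_.l1Dist (f x) (g x)) K :=
  (hf.fst.sub hg.fst).abs.add (hf.snd.sub hg.snd).abs

lemma abs_sub_le_of_edelstein {φ : ℝ → ℝ} (hφ : ∀ x y, x ≠ y → |φ x - φ y| < |x - y|)
    (x y : ℝ) : |φ x - φ y| ≤ |x - y| := by
  rcases eq_or_ne x y with rfl | hxy
  · simp
  · exact (hφ x y hxy).le

lemma abs_sub_add_abs_sub_lt_l1Dist {s r : ℝ → ℝ}
    (hs : ∀ x y, x ≠ y → |s x - s y| < |x - y|) (hr : ∀ x y, x ≠ y → |r x - r y| < |x - y|)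
    {P Q : ℝ × ℝ} (hPQ : P ≠ Q) :
    |s P.1 - s Q.1| + |r P.2 - r Q.2| < l1Dist P Q := by
  obtain h₁ | h₂ := not_and_or.1 (mt Prod.ext_iff.2 hPQ)
  · exact add_lt_add_of_lt_of_le (hs _ _ h₁) (abs_sub_le_of_edelstein hr _ _)
  · exact add_lt_add_of_le_of_lt (abs_sub_le_of_edelstein hs _ _) (hr _ _ h₂)

/-- The matrix `!![b, c; d, e]` with column sums of absolute values at most `1` does not
expand the `ℓ¹` norm. -/
lemma abs_mul_add_mul_add_abs_mul_add_mul_le {b c d e : ℝ} (hbd : |b| + |d| ≤ 1)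
    (hce : |c| + |e| ≤ 1) (u v : ℝ) :
    |b * u + c * v| + |d * u + e * v| ≤ |u| + |v| :=
  calc |b * u + c * v| + |d * u + e * v|
      ≤ (|b| * |u| + |c| * |v|) + (|d| * |u| + |e| * |v|) := by
        gcongr <;> exact (abs_add_le _ _).trans_eq (by rw [abs_mul, abs_mul])
    _ = (|b| + |d|) * |u| + (|c| + |e|) * |v| := by ring
    _ ≤ |u| + |v| :=
        add_le_add (mul_le_of_le_one_left (abs_nonneg u) hbd)
          (mul_le_of_le_one_left (abs_nonneg v) hce)

lemma l1Dist_lt_of_edelstein {s r : ℝ → ℝ}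
    (hs : ∀ x y, x ≠ y → |s x - s y| < |x - y|) (hr : ∀ x y, x ≠ y → |r x - r y| < |x - y|)
    {b c d e : ℝ} (hbd : |b| + |d| ≤ 1) (hce : |c| + |e| ≤ 1) (p q : ℝ)
    {P Q : ℝ × ℝ} (hPQ : P ≠ Q) :
    l1Dist (b * s P.1 + c * r P.2 + p, d * s P.1 + e * r P.2 + q)
      (b * s Q.1 + c * r Q.2 + p, d * s Q.1 + e * r Q.2 + q) < l1Dist P Q :=
  calc _ = |b * (s P.1 - s Q.1) + c * (r P.2 - r Q.2)|
          + |d * (s P.1 - s Q.1) + e * (r P.2 - r Q.2)| := by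
        simp only [l1Dist]; ring_nf
    _ ≤ |s P.1 - s Q.1| + |r P.2 - r Q.2| := abs_mul_add_mul_add_abs_mul_add_mul_le hbd hce _ _
    _ < l1Dist P Q := abs_sub_add_abs_sub_lt_l1Dist hs hr hPQ

lemma exists_lt_mem_Icc_succ (t : ℕ → ℝ) {N : ℕ} (hN : 0 < N) {y : ℝ}
    (hy : y ∈ Icc (t 0) (t N)) : ∃ j < N, y ∈ Icc (t j) (t (j + 1)) := by
  induction N with
  | zero => omega
  | succ n ih =>
    rcases Nat.eq_zero_or_pos n with rfl | hn
    · exact ⟨0, Nat.one_pos, hy⟩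
    by_cases hyn : y ≤ t n
    · obtain ⟨j, hjn, hj⟩ := ih hn ⟨hy.1, hyn⟩
      exact ⟨j, hjn.trans n.lt_succ_self, hj⟩
    · exact ⟨n, n.lt_succ_self, (not_le.1 hyn).le, hy.2⟩

lemma ciSup_lt_ciSup_of_isCompact {α : Type*} [TopologicalSpace α] {K : Set α}
    (hK : IsCompact K) (hKne : K.Nonempty) {f g : α → ℝ} (hf : ContinuousOn f K)
    (hg : ContinuousOn g K) (hfg : ∀ y ∈ K, ∃ x ∈ K, f y < g x) :
    ⨆ y : K, f y < ⨆ x : K, g x := by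
  have : Nonempty K := hKne.to_subtype
  obtain ⟨y₀, hy₀, hmax⟩ := hK.exists_isMaxOn hKne hf
  obtain ⟨x, hx, hlt⟩ := hfg y₀ hy₀
  have hgBdd : BddAbove (range fun x : K => g x) := by
    rw [← image_eq_range]
    exact hK.bddAbove_image hg
  calc ⨆ y : K, f y ≤ f y₀ := ciSup_le fun y => hmax y.2
    _ < g x := hlt
    _ ≤ ⨆ x : K, g x := le_ciSup hgBdd ⟨x, hx⟩

theorem RB_Edelstein_general
    (N : ℕ) (hN : 0 < N)
    (t : ℕ → ℝ)
    (a fc : ℕ → ℝ) (L : ℕ → ℝ → ℝ)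
    (hL : ∀ j, 1 ≤ j → j ≤ N → ∀ x : ℝ, L j x = a j * x + fc j)
    (hL0 : ∀ j, 1 ≤ j → j ≤ N → L j (t 0) = t (j - 1))
    (hLN : ∀ j, 1 ≤ j → j ≤ N → L j (t N) = t j)
    (b c d e p q : ℕ → ℝ → ℝ)
    (hbd : ∀ j, 1 ≤ j → j ≤ N → ∃ B D : ℝ, B + D ≤ 1 ∧
      (∀ x ∈ Set.Icc (t 0) (t N), |b j x| ≤ B) ∧ (∀ x ∈ Set.Icc (t 0) (t N), |d j x| ≤ D))
    (hce : ∀ j, 1 ≤ j → j ≤ N → ∃ C E : ℝ, C + E ≤ 1 ∧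
      (∀ x ∈ Set.Icc (t 0) (t N), |c j x| ≤ C) ∧ (∀ x ∈ Set.Icc (t 0) (t N), |e j x| ≤ E))
    (s r : ℕ → ℝ → ℝ)
    (hs : ∀ j, 1 ≤ j → j ≤ N → ∀ x y : ℝ, x ≠ y → |s j x - s j y| < |x - y|)
    (hr : ∀ j, 1 ≤ j → j ≤ N → ∀ x y : ℝ, x ≠ y → |r j x - r j y| < |x - y|)
    (F : ℕ → ℝ → ℝ × ℝ → ℝ × ℝ)
    (hF : ∀ j x vw, F j x vw = (b j x * s j vw.1 + c j x * r j vw.2 + p j x,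
                                d j x * s j vw.1 + e j x * r j vw.2 + q j x))
    (h g : ℝ → ℝ × ℝ)
    (hhc : ContinuousOn h (Set.Icc (t 0) (t N)))
    (hgc : ContinuousOn g (Set.Icc (t 0) (t N)))
    (hne : ∃ x ∈ Set.Icc (t 0) (t N), h x ≠ g x)
    (Rh Rg : ℝ → ℝ × ℝ)
    (hRhc : ContinuousOn Rh (Set.Icc (t 0) (t N)))
    (hRgc : ContinuousOn Rg (Set.Icc (t 0) (t N)))
    (hRh : ∀ j, 1 ≤ j → j ≤ N → ∀ x ∈ Set.Icc (t 0) (t N), Rh (L j x) = F j x (h x))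
    (hRg : ∀ j, 1 ≤ j → j ≤ N → ∀ x ∈ Set.Icc (t 0) (t N), Rg (L j x) = F j x (g x)) :
    (⨆ x : Set.Icc (t 0) (t N), (|(Rh x.1).1 - (Rg x.1).1| + |(Rh x.1).2 - (Rg x.1).2|)) <
      ⨆ x : Set.Icc (t 0) (t N), (|(h x.1).1 - (g x.1).1| + |(h x.1).2 - (g x.1).2|) := by
  obtain ⟨x₀, hx₀, hhg₀⟩ := hne
  refine ciSup_lt_ciSup_of_isCompact (f := fun y => l1Dist (Rh y) (Rg y))
    (g := fun x => l1Dist (h x) (g x)) isCompact_Icc ⟨x₀, hx₀⟩ (hRhc.l1Dist hRgc)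
    (hhc.l1Dist hgc) fun y hy => ?_
  obtain ⟨j, hjN, hyj⟩ := exists_lt_mem_Icc_succ t hN hy
  have hj : 1 ≤ j + 1 ∧ j + 1 ≤ N := ⟨j.succ_pos, hjN⟩
  have hLc : ContinuousOn (L (j + 1)) (Icc (t 0) (t N)) := by
    rw [funext (hL _ hj.1 hj.2)]
    fun_prop
  obtain ⟨x, hx, rfl⟩ : y ∈ L (j + 1) '' Icc (t 0) (t N) := by
    refine intermediate_value_Icc (hx₀.1.trans hx₀.2) hLc ?_
    rwa [hL0 _ hj.1 hj.2, hLN _ hj.1 hj.2]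
  simp only [hRh _ hj.1 hj.2 x hx, hRg _ hj.1 hj.2 x hx]
  by_cases hhg : h x = g x
  · exact ⟨x₀, hx₀, by simpa [hhg, l1Dist_self] using l1Dist_pos hhg₀⟩
  obtain ⟨B, D, hBD, hB, hD⟩ := hbd _ hj.1 hj.2
  obtain ⟨C, E, hCE, hC, hE⟩ := hce _ hj.1 hj.2
  refine ⟨x, hx, ?_⟩
  rw [hF, hF]
  exact l1Dist_lt_of_edelstein (hs _ hj.1 hj.2) (hr _ hj.1 hj.2)
    (by linarith [hB x hx, hD x hx]) (by linarith [hC x hx, hE x hx]) _ _ hhg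

/-- The Read–Bajraktarević operator is an Edelstein contraction on `C_e(I)` with
respect to the sup-Manhattan metric `d_C`. -/
theorem RB_Edelstein
    (N : ℕ) (hN : 0 < N)
    (t v w : ℕ → ℝ)
    (htmono : ∀ j, j < N → t j < t (j + 1))
    (a fc : ℕ → ℝ) (L : ℕ → ℝ → ℝ)
    (hL : ∀ j, 1 ≤ j → j ≤ N → ∀ x : ℝ, L j x = a j * x + fc j)
    (ha : ∀ j, 1 ≤ j → j ≤ N → a j ≠ 0 ∧ |a j| < 1)
    (hL0 : ∀ j, 1 ≤ j → j ≤ N → L j (t 0) = t (j - 1))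
    (hLN : ∀ j, 1 ≤ j → j ≤ N → L j (t N) = t j)
    (b c d e p q : ℕ → ℝ → ℝ)
    (hLip : ∀ j, 1 ≤ j → j ≤ N → ∀ g ∈ ([b j, c j, d j, e j, p j, q j] : List (ℝ → ℝ)),
      ∃ Kg : NNReal, LipschitzOnWith Kg g (Set.Icc (t 0) (t N)))
    (hbd : ∀ j, 1 ≤ j → j ≤ N → ∃ B D : ℝ, B + D ≤ 1 ∧
      (∀ x ∈ Set.Icc (t 0) (t N), |b j x| ≤ B) ∧ (∀ x ∈ Set.Icc (t 0) (t N), |d j x| ≤ D))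
    (hce : ∀ j, 1 ≤ j → j ≤ N → ∃ C E : ℝ, C + E ≤ 1 ∧
      (∀ x ∈ Set.Icc (t 0) (t N), |c j x| ≤ C) ∧ (∀ x ∈ Set.Icc (t 0) (t N), |e j x| ≤ E))
    (s r : ℕ → ℝ → ℝ)
    (hs : ∀ j, 1 ≤ j → j ≤ N → ∀ x y : ℝ, x ≠ y → |s j x - s j y| < |x - y|)
    (hr : ∀ j, 1 ≤ j → j ≤ N → ∀ x y : ℝ, x ≠ y → |r j x - r j y| < |x - y|)
    (F : ℕ → ℝ → ℝ × ℝ → ℝ × ℝ)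
    (hF : ∀ j x vw, F j x vw = (b j x * s j vw.1 + c j x * r j vw.2 + p j x,
                                d j x * s j vw.1 + e j x * r j vw.2 + q j x))
    (hF0 : ∀ j, 1 ≤ j → j ≤ N → F j (t 0) (v 0, w 0) = (v (j - 1), w (j - 1)))
    (hFN : ∀ j, 1 ≤ j → j ≤ N → F j (t N) (v N, w N) = (v j, w j))
    (h g : ℝ → ℝ × ℝ)
    (hhc : ContinuousOn h (Set.Icc (t 0) (t N)))
    (hgc : ContinuousOn g (Set.Icc (t 0) (t N)))
    (hh0 : h (t 0) = (v 0, w 0)) (hhN : h (t N) = (v N, w N))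
    (hg0 : g (t 0) = (v 0, w 0)) (hgN : g (t N) = (v N, w N))
    (hne : ∃ x ∈ Set.Icc (t 0) (t N), h x ≠ g x)
    (Rh Rg : ℝ → ℝ × ℝ)
    (hRhc : ContinuousOn Rh (Set.Icc (t 0) (t N)))
    (hRgc : ContinuousOn Rg (Set.Icc (t 0) (t N)))
    (hRh : ∀ j, 1 ≤ j → j ≤ N → ∀ x ∈ Set.Icc (t 0) (t N), Rh (L j x) = F j x (h x))
    (hRg : ∀ j, 1 ≤ j → j ≤ N → ∀ x ∈ Set.Icc (t 0) (t N), Rg (L j x) = F j x (g x)) :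
    (⨆ x : Set.Icc (t 0) (t N), (|(Rh x.1).1 - (Rg x.1).1| + |(Rh x.1).2 - (Rg x.1).2|)) <
      ⨆ x : Set.Icc (t 0) (t N), (|(h x.1).1 - (g x.1).1| + |(h x.1).2 - (g x.1).2|) :=
  RB_Edelstein_general N hN t a fc L hL hL0 hLN b c d e p q hbd hce s r hs hr F hF h g hhc hgc hne
    Rh Rg hRhc hRgc hRh hRg
end
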